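/- arXiv:math/0311408 — 6 statements merged into one kernel-verified Lean document; each statement's English description precedes it below -/
import Mathlib

section
/- Let p ≥ 2 and let λ be a partition represented on an abacus with p runners. If the abacus configuration of λ has a beads on runner r−1 and b beads on runner r, then moving one bead from runner r one position to the left (to runner r−1) decreases the p-weight of the resulting partition by exactly a − b + 1 (where a negative decrease is an increase). -/
/-- The `p`-weight of an abacus configuration `S` on a `p`-runner abacus.
Positions are `0`-indexed: position `m` lies on runner `m % p` at level `m / p`.
The weight is the number of one-step downward bead moves needed to obtain `S`
from its pushed-up (core) configuration: the total of the bead levels minus the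
minimal possible total `∑_r C(c_r, 2)` where `c_r` is the number of beads on runner `r`. -/
def abacusWeight (p : ℕ) (S : Finset ℕ) : ℤ :=
  (∑ m ∈ S, (m / p : ℤ)) -
    ∑ r ∈ Finset.range p, ((S.filter (fun m => m % p = r)).card.choose 2 : ℤ)

/-- Moving one bead on runner `r` one position to the left (to runner `r - 1`)
decreases the `p`-weight by exactly `a - b + 1`, where `a` is the number of beads
on runner `r - 1` and `b` the number of beads on runner `r`. -/
theorem weight_decrease_one_move (p r m : ℕ) (S : Finset ℕ)
    (hp : 2 ≤ p) (hr : 0 < r) (hrp : r < p)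
    (hm : m ∈ S) (hres : m % p = r) (hgap : m - 1 ∉ S) :
    abacusWeight p S - abacusWeight p (insert (m - 1) (S.erase m)) =
      ((S.filter (fun x => x % p = r - 1)).card : ℤ)
        - ((S.filter (fun x => x % p = r)).card : ℤ) + 1 := by
  have hp0 : 0 < p := by omega
  have hm0 : 0 < m := by
    rcases Nat.eq_zero_or_pos m with h | h
    · subst h; simp at hres; omega
    · exact h
  have hq : p * (m / p) + r = m := by rw [← hres]; exact Nat.div_add_mod m p
  have hm1 : m - 1 = (r - 1) + p * (m / p) := by omega
  have h1 : (m - 1) % p = r - 1 := by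
    rw [hm1, Nat.add_mul_mod_self_left, Nat.mod_eq_of_lt (by omega)]
  have h2 : (m - 1) / p = m / p := by
    rw [hm1, Nat.add_mul_div_left _ _ hp0, Nat.div_eq_of_lt (by omega), Nat.zero_add]
  have hne : m - 1 ∉ S.erase m := fun h => hgap (Finset.mem_of_mem_erase h)
  have hlev : ∑ x ∈ insert (m-1) (S.erase m), (x / p : ℤ) = ∑ x ∈ S, (x / p : ℤ) := by
    rw [Finset.sum_insert hne, Finset.sum_erase_eq_sub hm]
    have : ((m - 1 : ℕ) : ℤ) / (p : ℤ) = ((m : ℕ) : ℤ) / (p : ℤ) := by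
      rw [← Int.natCast_div, ← Int.natCast_div, h2]
    rw [this]; ring
  have key : ∀ j, ((insert (m-1) (S.erase m)).filter (fun x => x % p = j)) =
      if r - 1 = j then insert (m-1) (S.filter (fun x => x % p = j))
      else if r = j then (S.filter (fun x => x % p = j)).erase m
      else S.filter (fun x => x % p = j) := by
    intro j
    rw [Finset.filter_insert, Finset.filter_erase, h1]
    by_cases hj1 : r - 1 = j
    · simp only [if_pos hj1]
      congr 1
      apply Finset.erase_eq_of_notMem
      simp only [Finset.mem_filter, hres, not_and]
      intro _ h
      omega
    · simp only [if_neg hj1]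
      by_cases hj2 : r = j
      · rw [if_pos hj2]
      · rw [if_neg hj2]
        apply Finset.erase_eq_of_notMem
        simp only [Finset.mem_filter, hres, not_and]
        intro _ h
        exact hj2 h
  have hmf : m ∈ S.filter (fun x => x % p = r) := Finset.mem_filter.mpr ⟨hm, hres⟩
  have hb : 0 < (S.filter (fun x => x % p = r)).card := Finset.card_pos.mpr ⟨m, hmf⟩
  have hm1f : m - 1 ∉ S.filter (fun x => x % p = (r-1)) := fun h => hgap (Finset.mem_filter.mp h).1
  have hsum2 : ∑ j ∈ Finset.range p,
      (((insert (m-1) (S.erase m)).filter (fun x => x % p = j)).card.choose 2 : ℤ)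
      = ∑ j ∈ Finset.range p, (((S.filter (fun x => x % p = j)).card.choose 2 : ℤ)
          + ((if j = r - 1 then ((S.filter (fun x => x % p = (r-1))).card : ℤ) else 0)
          + (if j = r then 1 - ((S.filter (fun x => x % p = r)).card : ℤ) else 0))) := by
    apply Finset.sum_congr rfl
    intro j hj
    rw [key j]
    by_cases hj1 : r - 1 = j
    · subst hj1
      rw [if_pos rfl, if_pos rfl, if_neg (by omega)]
      rw [Finset.card_insert_of_notMem hm1f]
      have : ((S.filter (fun x => x % p = (r-1))).card + 1).choose 2
          = (S.filter (fun x => x % p = (r-1))).card.choose 2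
            + (S.filter (fun x => x % p = (r-1))).card := by
        rw [Nat.choose_succ_succ, Nat.choose_one_right, Nat.add_comm]
      rw [this]
      push_cast
      ring
    · rw [if_neg hj1]
      by_cases hj2 : r = j
      · subst hj2
        rw [if_pos rfl, if_neg (by omega), if_pos rfl]
        rw [Finset.card_erase_of_mem hmf]
        obtain ⟨c, hc⟩ : ∃ c, (S.filter (fun x => x % p = r)).card = c + 1 :=
          ⟨(S.filter (fun x => x % p = r)).card - 1, by omega⟩
        rw [hc]
        have : (c + 1).choose 2 = c.choose 2 + c := by
          rw [Nat.choose_succ_succ, Nat.choose_one_right, Nat.add_comm]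
        rw [this]
        push_cast [Nat.add_sub_cancel]
        ring
      · rw [if_neg hj2, if_neg (by omega), if_neg (by omega)]
        ring
  unfold abacusWeight
  rw [hlev, hsum2, Finset.sum_add_distrib, Finset.sum_add_distrib,
    Finset.sum_ite_eq' (Finset.range p) (r-1), Finset.sum_ite_eq' (Finset.range p) r,
    if_pos (Finset.mem_range.mpr (by omega)), if_pos (Finset.mem_range.mpr hrp)]
  ring
end

section
/- Let p ≥ 2 and let λ be a partition on a p-abacus with a beads on runner r−1 and b beads on runner r. Moving k beads from runner r each one position to the left (to runner r−1) decreases the p-weight by k(a − b + k). -/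
lemma choose_two_add (n k : ℕ) : (n + k).choose 2 = n.choose 2 + n * k + k.choose 2 := by
  induction k with
  | zero => simp
  | succ k ih =>
    have h1 : n + (k + 1) = (n + k) + 1 := by omega
    rw [h1, Nat.choose_succ_succ, Nat.choose_one_right, ih,
      Nat.choose_succ_succ, Nat.choose_one_right, Nat.mul_succ]
    simp only [show Nat.succ 1 = 2 from rfl]
    omega

/-- Moving `k` beads on runner `r` (the set `T` of beads, each with empty position
immediately to its left) one position to the left decreases the `p`-weight by
`k * (a - b + k)`, where `a`, `b` are the numbers of beads on runners `r - 1`, `r`. -/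
theorem weight_decrease_k_moves (p r k : ℕ) (S T : Finset ℕ)
    (hp : 2 ≤ p) (hr : 0 < r) (hrp : r < p)
    (hT : T ⊆ S) (hk : T.card = k)
    (hmoves : ∀ m ∈ T, m % p = r ∧ m - 1 ∉ S) :
    abacusWeight p S - abacusWeight p ((S \ T) ∪ T.image (fun m => m - 1)) =
      (k : ℤ) * (((S.filter (fun x => x % p = r - 1)).card : ℤ)
        - ((S.filter (fun x => x % p = r)).card : ℤ) + k) := by
  classical
  set f : ℕ → ℕ := fun m => m - 1 with hf
  have hm1 : ∀ m ∈ T, 1 ≤ m := by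
    intro m hm
    have h := (hmoves m hm).1
    rcases Nat.eq_zero_or_pos m with h0 | h1
    · subst h0; simp at h; omega
    · exact h1
  have key : ∀ m ∈ T, (m - 1) % p = r - 1 ∧ (m - 1) / p = m / p := by
    intro m hm
    have h1 := (hmoves m hm).1
    have hm0 : 1 ≤ m := hm1 m hm
    have hd := Nat.div_add_mod m p
    have hrw : m - 1 = p * (m / p) + (r - 1) := by omega
    constructor
    · have h2 : (r - 1) % p = r - 1 := Nat.mod_eq_of_lt (by omega)
      rw [hrw, Nat.mul_add_mod, h2]
    · have h2 : (r - 1) / p = 0 := Nat.div_eq_of_lt (by omega)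
      rw [hrw, Nat.mul_add_div (show 0 < p by omega), h2, Nat.add_zero]
  have hinj : Set.InjOn f T := by
    intro m hm n hn h
    have := hm1 m hm; have := hm1 n hn
    simp only [hf] at h; omega
  have hIS : ∀ x ∈ T.image f, x ∉ S := by
    intro x hx
    obtain ⟨m, hm, rfl⟩ := Finset.mem_image.mp hx
    exact (hmoves m hm).2
  have hdisj : Disjoint (S \ T) (T.image f) := by
    rw [Finset.disjoint_left]
    intro x hx hx'
    exact hIS x hx' (Finset.mem_sdiff.mp hx).1
  -- the level sums agree
  have h1 : (∑ m ∈ (S \ T) ∪ T.image f, (m / p : ℤ)) = ∑ m ∈ S, (m / p : ℤ) := by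
    rw [Finset.sum_union hdisj, Finset.sum_image (fun m hm n hn h => hinj hm hn h)]
    have : (∑ m ∈ T, ((f m) / p : ℤ)) = ∑ m ∈ T, (m / p : ℤ) := by
      refine Finset.sum_congr rfl fun m hm => ?_
      simp only [hf]
      rw [← Int.natCast_div, ← Int.natCast_div, (key m hm).2]
    rw [this, Finset.sum_sdiff hT]
  -- filters away from r-1, r are untouched
  have hf_other : ∀ s, s ≠ r - 1 → s ≠ r →
      ((S \ T) ∪ T.image f).filter (fun x => x % p = s) =
        S.filter (fun x => x % p = s) := by
    intro s hs1 hs2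
    ext x
    simp only [Finset.mem_filter, Finset.mem_union, Finset.mem_sdiff, Finset.mem_image]
    constructor
    · rintro ⟨⟨hxS, _⟩ | ⟨m, hm, rfl⟩, hx⟩
      · exact ⟨hxS, hx⟩
      · exact absurd hx (by rw [(key m hm).1]; exact fun h => hs1 h.symm)
    · rintro ⟨hxS, hx⟩
      refine ⟨Or.inl ⟨hxS, fun hxT => ?_⟩, hx⟩
      exact hs2 (by have := (hmoves x hxT).1; omega)
  have hf_r : ((S \ T) ∪ T.image f).filter (fun x => x % p = r) =
      (S.filter (fun x => x % p = r)) \ T := by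
    ext x
    simp only [Finset.mem_filter, Finset.mem_union, Finset.mem_sdiff, Finset.mem_image]
    constructor
    · rintro ⟨⟨hxS, hxT⟩ | ⟨m, hm, rfl⟩, hx⟩
      · exact ⟨⟨hxS, hx⟩, hxT⟩
      · exact absurd hx (by rw [(key m hm).1]; omega)
    · rintro ⟨⟨hxS, hx⟩, hxT⟩
      exact ⟨Or.inl ⟨hxS, hxT⟩, hx⟩
  have hf_r1 : ((S \ T) ∪ T.image f).filter (fun x => x % p = r - 1) =
      (S.filter (fun x => x % p = r - 1)) ∪ T.image f := by
    ext x
    simp only [Finset.mem_filter, Finset.mem_union, Finset.mem_sdiff, Finset.mem_image]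
    constructor
    · rintro ⟨⟨hxS, hxT⟩ | hx, hx'⟩
      · exact Or.inl ⟨hxS, hx'⟩
      · exact Or.inr hx
    · rintro (⟨hxS, hx⟩ | hx)
      · refine ⟨Or.inl ⟨hxS, fun hxT => ?_⟩, hx⟩
        have := (hmoves x hxT).1
        omega
      · obtain ⟨m, hm, rfl⟩ := hx
        exact ⟨Or.inr ⟨m, hm, rfl⟩, (key m hm).1⟩
  -- cardinalities
  have hTsub : T ⊆ S.filter (fun x => x % p = r) := by
    intro m hm
    exact Finset.mem_filter.mpr ⟨hT hm, (hmoves m hm).1⟩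
  have hbk : k ≤ (S.filter (fun x => x % p = r)).card := hk ▸ Finset.card_le_card hTsub
  have hcard_r : (((S \ T) ∪ T.image f).filter (fun x => x % p = r)).card =
      (S.filter (fun x => x % p = r)).card - k := by
    rw [hf_r, Finset.card_sdiff_of_subset hTsub, hk]
  have hdisj1 : Disjoint (S.filter (fun x => x % p = r - 1)) (T.image f) := by
    rw [Finset.disjoint_left]
    intro x hx hx'
    exact hIS x hx' (Finset.mem_filter.mp hx).1
  have hcard_r1 : (((S \ T) ∪ T.image f).filter (fun x => x % p = r - 1)).card =
      (S.filter (fun x => x % p = r - 1)).card + k := by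
    rw [hf_r1, Finset.card_union_of_disjoint hdisj1, Finset.card_image_of_injOn hinj, hk]
  set a := (S.filter (fun x => x % p = r - 1)).card with ha
  set b := (S.filter (fun x => x % p = r)).card with hb
  -- reduce to the choose sums
  unfold abacusWeight
  rw [h1]
  have hsum : (∑ s ∈ Finset.range p,
        (((((S \ T) ∪ T.image f).filter (fun m => m % p = s)).card.choose 2 : ℤ)
          - ((S.filter (fun m => m % p = s)).card.choose 2 : ℤ))) =
      ∑ s ∈ ({r - 1, r} : Finset ℕ),
        (((((S \ T) ∪ T.image f).filter (fun m => m % p = s)).card.choose 2 : ℤ)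
          - ((S.filter (fun m => m % p = s)).card.choose 2 : ℤ)) := by
    refine (Finset.sum_subset ?_ ?_).symm
    · intro s hs
      simp only [Finset.mem_insert, Finset.mem_singleton] at hs
      rcases hs with rfl | rfl
      · exact Finset.mem_range.mpr (by omega)
      · exact Finset.mem_range.mpr (by omega)
    · intro s _ hs
      simp only [Finset.mem_insert, Finset.mem_singleton, not_or] at hs
      rw [hf_other s hs.1 hs.2]
      ring
  have hpair : ({r - 1, r} : Finset ℕ) = {r - 1, r} := rfl
  have hne : r - 1 ≠ r := by omega
  have expand : (∑ s ∈ Finset.range p,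
        ((((S \ T) ∪ T.image f).filter (fun m => m % p = s)).card.choose 2 : ℤ))
      - ∑ s ∈ Finset.range p, ((S.filter (fun m => m % p = s)).card.choose 2 : ℤ)
      = ((a + k).choose 2 : ℤ) - (a.choose 2 : ℤ)
        + (((b - k).choose 2 : ℤ) - (b.choose 2 : ℤ)) := by
    rw [← Finset.sum_sub_distrib, hsum, Finset.sum_pair hne, hcard_r1, hcard_r]
  have hchoose1 : ((a + k).choose 2 : ℤ) = (a.choose 2 : ℤ) + a * k + (k.choose 2 : ℤ) := by
    rw [choose_two_add]; push_cast; ring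
  have hchoose2 : (b.choose 2 : ℤ) =
      ((b - k).choose 2 : ℤ) + ((b - k : ℕ) : ℤ) * k + (k.choose 2 : ℤ) := by
    have h := choose_two_add (b - k) k
    rw [Nat.sub_add_cancel hbk] at h
    rw [h]; push_cast; ring
  have hbk' : ((b - k : ℕ) : ℤ) = (b : ℤ) - k := by omega
  have goal2 : ((a + k).choose 2 : ℤ) - (a.choose 2 : ℤ)
        + (((b - k).choose 2 : ℤ) - (b.choose 2 : ℤ))
      = (k : ℤ) * ((a : ℤ) - (b : ℤ) + k) := by
    rw [hchoose1, hchoose2, hbk']; ring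
  linarith [expand, goal2]
end

section
/- Let μ be a partition and r a residue mod p. If μ has exactly k normal r-nodes, then removing all k of these normal r-nodes from μ yields a partition whose p-weight is at most the p-weight of μ. -/
open scoped Classical

/-- Row `i` (0-indexed) of the partition `f : ℕ → ℕ` has a removable node of
residue `r` mod `p`: the last node `(i, f i - 1)` of the row can be removed
(i.e. `f (i+1) < f i`) and its residue `column - row (mod p)` is `r`. -/
def HasRemovable (p : ℕ) (r : ZMod p) (f : ℕ → ℕ) (i : ℕ) : Prop :=
  f (i + 1) < f i ∧ ((f i - 1 : ℕ) : ZMod p) - (i : ZMod p) = r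

/-- Row `i` (0-indexed) of the partition `f` has an addable node of residue `r`
mod `p`: the node `(i, f i)` can be added and has residue `r`. -/
def HasAddable (p : ℕ) (r : ZMod p) (f : ℕ → ℕ) (i : ℕ) : Prop :=
  (i = 0 ∨ f i < f (i - 1)) ∧ (f i : ZMod p) - (i : ZMod p) = r

/-- The removable `r`-node in row `i` is *normal*: for every addable `r`-node in an
earlier row `i' < i`, there are strictly more removable `r`-nodes than addable
`r`-nodes in the rows strictly between them. -/
def IsNormal (p : ℕ) (r : ZMod p) (f : ℕ → ℕ) (i : ℕ) : Prop :=
  HasRemovable p r f i ∧ ∀ i' < i, HasAddable p r f i' →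
    Set.ncard {i'' | i' < i'' ∧ i'' < i ∧ HasAddable p r f i''} <
      Set.ncard {i'' | i' < i'' ∧ i'' < i ∧ HasRemovable p r f i''}

/-- The hook length of the node `(i, j)` (0-indexed) of the partition `f`:
arm length plus leg length plus one, where the column length of column `j`
is `#{i' | j < f i'}`. -/
noncomputable def hookLen (f : ℕ → ℕ) (i j : ℕ) : ℕ :=
  (f i - j - 1) + (Set.ncard {i' | j < f i'} - i - 1) + 1

/-- The `p`-weight of the partition `f`: the number of nodes of its diagram whose
hook length is divisible by `p` (this equals the number of one-step bead slides
relating the abacus of `f` to that of its `p`-core). -/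
noncomputable def pWeight (p : ℕ) (f : ℕ → ℕ) : ℕ :=
  Set.ncard {x : ℕ × ℕ | x.2 < f x.1 ∧ p ∣ hookLen f x.1 x.2}

/-!
Encode a partition `f` by its β-set `{f i - i}`. The nodes of `f` correspond to the pairs
(bead `b`, gap `c < b`), with hook length `b - c`, so the `p`-weight is the total number of
inversions of the `p` runners of the abacus. Removing the normal `r`-nodes slides the beads of a
set `N` from the runner `s` of residue `r + 1` one step down onto the runner `s - 1`, and leaves
the other runners alone.

On a runner that is full below `t`, with beads `F` at positions `≥ t`, the number of inversions
is `∑ x ∈ F, (x - t) - (#F).choose 2`. The sums cancel, and the two runners lose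
`#N * (#N - (a - b))` inversions in total, where `a - b` is the excess of beads of runner `s`
over runner `s - 1`, that is, the number of removable minus addable `r`-nodes. This is `≥ 0`
since the normal `r`-nodes are the removable nodes at which the height of the `r`-signature,
read from the top row, reaches a new maximum, and the final height is `a - b`.
-/

open Finset

section Signature

variable {R A : ℕ → Prop}

-- `IsNormal p r f` unfolds to `IsNormalIn (HasRemovable p r f) (HasAddable p r f)`.
def IsNormalIn (R A : ℕ → Prop) (i : ℕ) : Prop :=
  R i ∧ ∀ i' < i, A i' →
    Set.ncard {x | i' < x ∧ x < i ∧ A x} < Set.ncard {x | i' < x ∧ x < i ∧ R x}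

noncomputable def signatureHeight (R A : ℕ → Prop) (n : ℕ) : ℤ :=
  ∑ x ∈ range n, ((if R x then 1 else 0) - (if A x then 1 else 0))

lemma ncard_setOf_mem_Ioo (P : ℕ → Prop) (a b : ℕ) :
    Set.ncard {x | a < x ∧ x < b ∧ P x} = #{x ∈ Ioo a b | P x} := by
  rw [← Set.ncard_coe_finset]
  congr 1
  ext x
  simp [and_assoc]

lemma signatureHeight_succ (n : ℕ) :
    signatureHeight R A (n + 1) =
      signatureHeight R A n + ((if R n then 1 else 0) - (if A n then 1 else 0)) :=
  sum_range_succ _ n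

lemma signatureHeight_eq_add_sum_Ioo {a b : ℕ} (hab : a < b) :
    signatureHeight R A b =
      signatureHeight R A (a + 1) + (#{x ∈ Ioo a b | R x} - #{x ∈ Ioo a b | A x}) := by
  rw [signatureHeight, signatureHeight, ← sum_range_add_sum_Ico _ hab, ← Ico_add_one_left_eq_Ioo,
    sum_sub_distrib (s := Ico (a + 1) b), sum_boole, sum_boole]

lemma isNormalIn_iff (hRA : ∀ x, R x → ¬ A x) {i : ℕ} :
    IsNormalIn R A i ↔ R i ∧ ∀ u ≤ i, signatureHeight R A u ≤ signatureHeight R A i := by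
  simp only [IsNormalIn, ncard_setOf_mem_Ioo]
  refine and_congr_right fun _ => ⟨fun hnorm u hu => ?_, fun hmax i' hi' hA => ?_⟩
  · induction hu using Nat.decreasingInduction with
    | self => rfl
    | of_succ u hu ih =>
      by_cases hA : A u
      · have := signatureHeight_eq_add_sum_Ioo (R := R) (A := A) hu
        have := hnorm u hu hA
        rw [signatureHeight_succ, if_neg (fun hR => hRA u hR hA), if_pos hA] at *
        omega
      · rw [signatureHeight_succ, if_neg hA] at ih
        split_ifs at ih <;> omega
  · have := signatureHeight_eq_add_sum_Ioo (R := R) (A := A) hi'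
    have := hmax i' hi'.le
    rw [signatureHeight_succ, if_neg (fun hR => hRA i' hR hA), if_pos hA] at *
    omega

lemma signatureHeight_le_card_isNormalIn (hRA : ∀ x, R x → ¬ A x) (n : ℕ) :
    ∀ u ≤ n, signatureHeight R A u ≤ #{x ∈ range n | IsNormalIn R A x} := by
  induction n with
  | zero => simp [signatureHeight]
  | succ n ih =>
    intro u hu
    have hmono : #{x ∈ range n | IsNormalIn R A x} ≤ #{x ∈ range (n + 1) | IsNormalIn R A x} :=
      card_le_card (filter_subset_filter _ (range_subset_range.mpr n.le_succ))
    rcases hu.lt_or_eq with hu | rfl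
    · exact (ih u (by omega)).trans (by exact_mod_cast hmono)
    rw [range_add_one, filter_insert, signatureHeight_succ]
    have hn := ih n le_rfl
    by_cases hnorm : IsNormalIn R A n
    · rw [if_pos hnorm, card_insert_of_notMem (by simp)]
      split_ifs <;> push_cast <;> omega
    rw [if_neg hnorm]
    by_cases hR : R n
    · obtain ⟨u, hu, hlt⟩ : ∃ u ≤ n, signatureHeight R A n < signatureHeight R A u := by
        simpa [isNormalIn_iff hRA, hR] using hnorm
      rw [if_pos hR, if_neg (hRA n hR)]
      have := ih u hu
      omega
    · rw [if_neg hR]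
      split_ifs <;> omega

theorem ncard_le_ncard_add_ncard_isNormalIn (hRA : ∀ x, R x → ¬ A x)
    (hR : {x | R x}.Finite) (hA : {x | A x}.Finite) :
    {x | R x}.ncard ≤ {x | A x}.ncard + {x | IsNormalIn R A x}.ncard := by
  obtain ⟨n, hn⟩ := hR.bddAbove
  have hRn : {x | R x} = ↑{x ∈ range (n + 1) | R x} := by
    ext x
    simpa [Nat.lt_succ_iff] using fun hx => hn hx
  have hNn : {x | IsNormalIn R A x} = ↑{x ∈ range (n + 1) | IsNormalIn R A x} := by
    ext x
    simpa [Nat.lt_succ_iff] using fun hx => hn hx.1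
  have hAn : #{x ∈ range (n + 1) | A x} ≤ {x | A x}.ncard := by
    rw [← Set.ncard_coe_finset]
    exact Set.ncard_le_ncard (fun x hx => (mem_filter.mp hx).2) hA
  have key := signatureHeight_le_card_isNormalIn hRA (n + 1) (n + 1) le_rfl
  rw [signatureHeight, sum_sub_distrib, sum_boole, sum_boole] at key
  rw [hRn, hNn, Set.ncard_coe_finset, Set.ncard_coe_finset]
  omega

end Signature

section Inversions

def inversions (T : Set ℤ) : Set (ℤ × ℤ) := {y | y.1 ∈ T ∧ y.2 ∉ T ∧ y.2 < y.1}

theorem Finset.sum_card_filter_lt {α : Type*} [LinearOrder α] (F : Finset α) :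
    ∑ x ∈ F, #{y ∈ F | y < x} = (#F).choose 2 := by
  induction F using Finset.induction_on_max with
  | empty => simp
  | insert a F ha ih =>
    have ha' : a ∉ F := fun h => lt_irrefl a (ha a h)
    rw [sum_insert ha', card_insert_of_notMem ha', Nat.choose_succ_succ', Nat.choose_one_right,
      ← ih, filter_insert, if_neg (lt_irrefl a), filter_true_of_mem ha]
    congr 1
    refine sum_congr rfl fun x hx => ?_
    rw [filter_insert, if_neg (ha x hx).not_gt]

lemma ncard_inversions_Iio_union {t : ℤ} {F : Finset ℤ} (hF : ∀ x ∈ F, t ≤ x) :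
    ((inversions (Set.Iio t ∪ ↑F)).ncard : ℤ) = ∑ x ∈ F, (x - t) - ((#F).choose 2 : ℕ) := by
  have hinv : inversions (Set.Iio t ∪ ↑F) =
      ↑(F.biUnion fun x => {x} ×ˢ {y ∈ Ico t x | y ∉ F}) := by
    ext ⟨x, y⟩
    simp only [inversions, Set.mem_ofPred_eq, Set.mem_union, Set.mem_Iio, mem_coe, coe_biUnion,
      Set.mem_iUnion, coe_product, coe_singleton, coe_filter, mem_Ico, Set.mem_prod,
      Set.mem_singleton_iff, exists_prop]
    constructor
    · rintro ⟨hx | hx, hy, hyx⟩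
      · exact absurd (Or.inl (hyx.trans hx)) hy
      · exact ⟨x, hx, rfl, ⟨not_lt.mp fun h => hy (Or.inl h), hyx⟩, fun h => hy (Or.inr h)⟩
    · rintro ⟨x, hx, rfl, ⟨hty, hyx⟩, hy⟩
      exact ⟨Or.inr hx, by simp [hy, hty], hyx⟩
  have hgaps : ∀ x ∈ F, (#({x} ×ˢ {y ∈ Ico t x | y ∉ F}) : ℤ) = (x - t) - #{y ∈ F | y < x} := by
    intro x hx
    have hsplit := card_filter_add_card_filter_not (s := Ico t x) (· ∈ F)
    have hbeads : {y ∈ Ico t x | y ∈ F} = {y ∈ F | y < x} := by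
      ext y
      simp only [mem_filter, mem_Ico]
      constructor
      · rintro ⟨⟨-, hyx⟩, hy⟩
        exact ⟨hy, hyx⟩
      · rintro ⟨hy, hyx⟩
        exact ⟨⟨hF y hy, hyx⟩, hy⟩
    rw [hbeads, Int.card_Ico] at hsplit
    rw [card_product, card_singleton, one_mul]
    have := hF x hx
    omega
  have hdisj : (F : Set ℤ).PairwiseDisjoint fun x => {x} ×ˢ {y ∈ Ico t x | y ∉ F} :=
    fun x _ x' _ hxx' => disjoint_product.mpr (Or.inl (disjoint_singleton.mpr hxx'))
  rw [hinv, Set.ncard_coe_finset, card_biUnion hdisj, Nat.cast_sum, sum_congr rfl hgaps,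
    sum_sub_distrib, ← sum_card_filter_lt, Nat.cast_sum]

lemma Nat.choose_two_add_add_le {a b : ℕ} (n : ℕ) (hab : a ≤ b) :
    (a + n).choose 2 + b.choose 2 ≤ a.choose 2 + (b + n).choose 2 := by
  have key : ((a + n).choose 2 + b.choose 2 : ℚ) ≤ a.choose 2 + (b + n).choose 2 := by
    simp only [Nat.cast_choose_two, Nat.cast_add]
    have : (a : ℚ) ≤ b := by exact_mod_cast hab
    nlinarith [(n.cast_nonneg : (0 : ℚ) ≤ n)]
  exact_mod_cast key

lemma ncard_inversions_transfer_le_of_finset {t : ℤ} {FS FR FN : Finset ℤ}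
    (hS : ∀ x ∈ FS, t ≤ x) (hR : ∀ x ∈ FR, t ≤ x) (hNS : FN ⊆ FS) (hNR : Disjoint FN FR)
    (hcard : #(FS \ FR) ≤ #(FR \ FS) + #FN) :
    (inversions (Set.Iio t ∪ ↑(FR ∪ FN))).ncard + (inversions (Set.Iio t ∪ ↑(FS \ FN))).ncard ≤
      (inversions (Set.Iio t ∪ ↑FR)).ncard + (inversions (Set.Iio t ∪ ↑FS)).ncard := by
  have hRN : ∀ x ∈ FR ∪ FN, t ≤ x := fun x hx =>
    (mem_union.mp hx).elim (hR x) fun hx => hS x (hNS hx)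
  have hSN : ∀ x ∈ FS \ FN, t ≤ x := fun x hx => hS x (mem_sdiff.mp hx).1
  have hsum := sum_sdiff hNS (f := fun x => x - t)
  have hFS := card_sdiff_add_card_eq_card hNS
  have hSR := card_sdiff_add_card_inter FS FR
  have hRS := card_sdiff_add_card_inter FR FS
  rw [inter_comm] at hRS
  have hchoose := Nat.choose_two_add_add_le #FN (show #(FS \ FN) ≤ #FR by omega)
  zify at hchoose
  -- the position sums over `FN` cancel; only the binomial terms change
  rw [← Nat.cast_le (α := ℤ), Nat.cast_add, Nat.cast_add, ncard_inversions_Iio_union hRN,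
    ncard_inversions_Iio_union hSN, ncard_inversions_Iio_union hR, ncard_inversions_Iio_union hS,
    sum_union hNR.symm, card_union_of_disjoint hNR.symm, ← hFS]
  linarith

lemma exists_finset_eq_Iio_union {S : Set ℤ} {t : ℤ} (hS : Set.Iio t ⊆ S)
    (hfin : (S ∩ Set.Ici t).Finite) : ∃ F : Finset ℤ, (∀ x ∈ F, t ≤ x) ∧ S = Set.Iio t ∪ ↑F := by
  refine ⟨hfin.toFinset, fun x hx => (hfin.mem_toFinset.mp hx).2, ?_⟩
  ext x
  rw [Set.mem_union, mem_coe, hfin.mem_toFinset, Set.mem_inter_iff, Set.mem_Iio, Set.mem_Ici]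
  exact ⟨fun hx => (lt_or_ge x t).imp_right (⟨hx, ·⟩), fun h => h.elim (hS ·) And.left⟩

lemma ncard_inversions_transfer_le {S R N : Set ℤ} {t : ℤ} (hS : Set.Iio t ⊆ S)
    (hR : Set.Iio t ⊆ R) (hSfin : (S ∩ Set.Ici t).Finite) (hRfin : (R ∩ Set.Ici t).Finite)
    (hN : N ⊆ S \ R) (hcard : (S \ R).ncard ≤ (R \ S).ncard + N.ncard) :
    (inversions (R ∪ N)).ncard + (inversions (S \ N)).ncard ≤
      (inversions R).ncard + (inversions S).ncard := by
  obtain ⟨FS, hFS, rfl⟩ := exists_finset_eq_Iio_union hS hSfin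
  obtain ⟨FR, hFR, rfl⟩ := exists_finset_eq_Iio_union hR hRfin
  have hdiff : ∀ {F G : Finset ℤ}, (∀ x ∈ F, t ≤ x) →
      (Set.Iio t ∪ ↑F) \ (Set.Iio t ∪ ↑G) = ↑(F \ G) := by
    intro F G hF
    ext x
    simp only [Set.mem_sdiff, Set.mem_union, Set.mem_Iio, mem_coe, coe_sdiff]
    constructor
    · rintro ⟨hx | hx, hxG⟩
      · exact absurd (Or.inl hx) hxG
      · exact ⟨hx, fun h => hxG (Or.inr h)⟩
    · rintro ⟨hx, hxG⟩
      exact ⟨Or.inr hx, by simp [hxG, hF x hx]⟩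
  rw [hdiff hFS] at hN
  obtain ⟨FN, rfl⟩ := ((FS \ FR).finite_toSet.subset hN).exists_finset_coe
  rw [hdiff hFS, hdiff hFR, Set.ncard_coe_finset, Set.ncard_coe_finset,
    Set.ncard_coe_finset] at hcard
  rw [coe_subset, subset_sdiff] at hN
  have hSN : (Set.Iio t ∪ ↑FS) \ ↑FN = Set.Iio t ∪ ↑(FS \ FN) := by
    rw [Set.union_sdiff_distrib, coe_sdiff, sdiff_eq_left.mpr]
    exact Set.disjoint_left.mpr fun x hx hxN => (not_le.mpr hx) (hFS x (hN.1 hxN))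
  rw [Set.union_assoc, ← coe_union, hSN]
  exact ncard_inversions_transfer_le_of_finset hFS hFR hN.1 hN.2 hcard

end Inversions

section Runners

def hookPairs (p : ℕ) (B : Set ℤ) : Set (ℤ × ℤ) := {y ∈ inversions B | (p : ℤ) ∣ y.1 - y.2}

def runner (p : ℕ) (B : Set ℤ) (s : ℤ) : Set ℤ := {m | s + p * m ∈ B}

def slideDown (B P : Set ℤ) : Set ℤ := B \ P ∪ (· - 1) '' P

variable {p : ℕ}

lemma add_natCast_mul_injective (p : ℕ) [NeZero p] (s : ℤ) :
    (fun m : ℤ => s + p * m).Injective :=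
  fun a b h => by simpa [NeZero.ne p] using h

lemma ncard_runner [NeZero p] {X : Set ℤ} {s : ℤ} (hX : ∀ x ∈ X, (x : ZMod p) = s) :
    (runner p X s).ncard = X.ncard := by
  rw [← Set.ncard_image_of_injective (runner p X s) (add_natCast_mul_injective p s)]
  congr 1
  refine Set.Subset.antisymm (Set.image_subset_iff.mpr fun m hm => hm) fun x hx => ?_
  obtain ⟨m, hm⟩ := (ZMod.intCast_eq_intCast_iff_dvd_sub _ _ _).mp (hX x hx).symm
  exact ⟨m, by simpa [runner, ← hm] using hx, by simp [← hm]⟩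

lemma ncard_hookPairs_filter_dvd [NeZero p] (B : Set ℤ) (s : ℤ) :
    {y ∈ hookPairs p B | (p : ℤ) ∣ y.1 - s}.ncard = (inversions (runner p B s)).ncard := by
  have hinj := add_natCast_mul_injective p s
  rw [← Set.ncard_image_of_injective (inversions (runner p B s)) (hinj.prodMap hinj)]
  congr 1
  ext ⟨b, c⟩
  simp only [Set.mem_image, Prod.exists, Prod.map_apply, Prod.mk.injEq]
  constructor
  · rintro ⟨⟨⟨hb, hc, hcb⟩, k, hk⟩, m, hm⟩
    dsimp only at hb hc hcb hk hm
    refine ⟨m, m - k, ⟨?_, ?_, ?_⟩, by linarith, by linarith⟩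
    · show s + p * m ∈ B
      rwa [show s + p * m = b by linarith]
    · show s + p * (m - k) ∉ B
      rwa [show s + p * (m - k) = c by linarith]
    · show m - k < m
      have hp : (0 : ℤ) < p := by exact_mod_cast Nat.pos_of_neZero p
      nlinarith
  · rintro ⟨m, m', ⟨hm, hm', hlt⟩, rfl, rfl⟩
    have hp : (0 : ℤ) < p := by exact_mod_cast Nat.pos_of_neZero p
    exact ⟨⟨⟨hm, hm', by nlinarith⟩, m - m', by ring⟩, m, by ring⟩

lemma val_intCast_eq_iff [NeZero p] {k : ℕ} (hk : k < p) (z : ℤ) :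
    (z : ZMod p).val = k ↔ (p : ℤ) ∣ z - k := by
  rw [← ZMod.intCast_eq_intCast_iff_dvd_sub, Int.cast_natCast]
  exact ⟨fun h => h ▸ ZMod.natCast_zmod_val _, fun h => h ▸ ZMod.val_cast_of_lt hk⟩

lemma ncard_hookPairs_eq_sum [NeZero p] {B : Set ℤ} (hfin : (hookPairs p B).Finite) (a : ℤ) :
    (hookPairs p B).ncard = ∑ k ∈ range p, (inversions (runner p B (a + k))).ncard := by
  rw [Set.ncard_eq_toFinset_card _ hfin,
    card_eq_sum_card_fiberwise (f := fun y => ((y.1 - a : ℤ) : ZMod p).val) (t := range p)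
      fun y _ => mem_range.mpr (ZMod.val_lt _)]
  refine sum_congr rfl fun k hk => ?_
  rw [← ncard_hookPairs_filter_dvd, ← Set.ncard_coe_finset]
  congr 1
  ext y
  rw [mem_coe, mem_filter, hfin.mem_toFinset, val_intCast_eq_iff (mem_range.mp hk), sub_sub]
  rfl

variable {B P : Set ℤ} {s : ℤ}

lemma runner_slideDown_self [Fact (1 < p)] (hP : ∀ x ∈ P, (x : ZMod p) = s) :
    runner p (slideDown B P) s = runner p B s \ runner p P s := by
  ext m
  simp only [runner, slideDown, Set.mem_ofPred_eq, Set.mem_union, Set.mem_sdiff, Set.mem_image,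
    or_iff_left_iff_imp]
  rintro ⟨x, hx, hxm⟩
  simpa [show x = s + p * m + 1 by linarith] using hP x hx

lemma runner_slideDown_sub_one [Fact (1 < p)] (hP : ∀ x ∈ P, (x : ZMod p) = s) :
    runner p (slideDown B P) (s - 1) = runner p B (s - 1) ∪ runner p P s := by
  ext m
  simp only [runner, slideDown, Set.mem_ofPred_eq, Set.mem_union, Set.mem_sdiff, Set.mem_image]
  have hm : s - 1 + p * m ∉ P := fun h => by simpa using hP _ h
  have hshift : (∃ x ∈ P, x - 1 = s - 1 + p * m) ↔ s + p * m ∈ P :=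
    ⟨fun ⟨x, hx, hxm⟩ => by rwa [show s + p * m = x by linarith], fun h => ⟨_, h, by ring⟩⟩
  rw [hshift]
  tauto

lemma runner_slideDown_of_ne (hP : ∀ x ∈ P, (x : ZMod p) = s) {s' : ℤ} (hs : (s' : ZMod p) ≠ s)
    (hs' : (s' : ZMod p) ≠ s - 1) : runner p (slideDown B P) s' = runner p B s' := by
  ext m
  simp only [runner, slideDown, Set.mem_ofPred_eq, Set.mem_union, Set.mem_sdiff, Set.mem_image]
  have hm : s' + p * m ∉ P := fun h => hs (by simpa using hP _ h)
  have hm' : ¬ ∃ x ∈ P, x - 1 = s' + p * m := fun ⟨x, hx, hxm⟩ => hs' <| by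
    have := hP x hx
    rw [show x = s' + p * m + 1 by linarith] at this
    simp at this
    linear_combination this
  simp only [hm, hm', not_false_eq_true, and_true, or_false]

end Runners

section BetaNumbers

def betaNum (f : ℕ → ℕ) (i : ℕ) : ℤ := f i - i

def betaSet (f : ℕ → ℕ) : Set ℤ := Set.range (betaNum f)

noncomputable def colLen (f : ℕ → ℕ) (j : ℕ) : ℕ := sInf {i | f i ≤ j}

-- Column `j` gives the gap `j + 1 - λ'ⱼ` of the β-set, so that hook lengths are bead-gap
-- differences (`hookLen_eq`).
noncomputable def gapNum (f : ℕ → ℕ) (j : ℕ) : ℤ := j + 1 - colLen f j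

variable {f : ℕ → ℕ} {n : ℕ}

lemma betaNum_strictAnti (hf : Antitone f) : StrictAnti (betaNum f) := fun i j hij => by
  have := hf hij.le
  simp only [betaNum]
  omega

lemma Iic_subset_betaSet (hf : Antitone f) (hn : f n = 0) : Set.Iic (-(n : ℤ)) ⊆ betaSet f :=
  fun x hx => ⟨(-x).toNat, by
    rw [Set.mem_Iic] at hx
    have : f (-x).toNat = 0 := Nat.eq_zero_of_le_zero (hn ▸ hf (by omega))
    simp only [betaNum, this]
    omega⟩

lemma betaSet_inter_Ici_finite (hf : Antitone f) (c : ℤ) : (betaSet f ∩ Set.Ici c).Finite := by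
  refine ((Set.finite_Iic (f 0 - c).toNat).image (betaNum f)).subset ?_
  rintro _ ⟨⟨i, rfl⟩, hi⟩
  refine ⟨i, ?_, rfl⟩
  have := hf (Nat.zero_le i)
  simp only [betaNum, Set.mem_Ici] at hi
  simp only [Set.mem_Iic]
  omega

lemma apply_colLen_le (hn : f n = 0) (j : ℕ) : f (colLen f j) ≤ j :=
  Nat.sInf_mem (s := {i | f i ≤ j}) ⟨n, by simp [hn]⟩

lemma colLen_le_of_apply_le {i j : ℕ} (h : f i ≤ j) : colLen f j ≤ i :=
  Nat.sInf_le (s := {i | f i ≤ j}) h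

lemma lt_colLen_iff (hf : Antitone f) (hn : f n = 0) {i j : ℕ} : i < colLen f j ↔ j < f i := by
  constructor
  · intro h
    by_contra hle
    exact (colLen_le_of_apply_le (not_lt.mp hle)).not_gt h
  · intro h
    by_contra hle
    have := hf (not_lt.mp hle)
    have := apply_colLen_le hn j
    omega

lemma ncard_lt_apply (hf : Antitone f) (hn : f n = 0) (j : ℕ) :
    {i | j < f i}.ncard = colLen f j := by
  have : {i | j < f i} = Set.Iio (colLen f j) := by
    ext i
    exact (lt_colLen_iff hf hn).symm
  rw [this, ← coe_range, Set.ncard_coe_finset, card_range]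

lemma hookLen_eq (hf : Antitone f) (hn : f n = 0) {i j : ℕ} (hij : j < f i) :
    (hookLen f i j : ℤ) = betaNum f i - gapNum f j := by
  have := (lt_colLen_iff hf hn).mpr hij
  simp only [hookLen, betaNum, gapNum, ncard_lt_apply hf hn]
  omega

lemma gapNum_lt_betaNum (hf : Antitone f) (hn : f n = 0) {i j : ℕ} (hij : j < f i) :
    gapNum f j < betaNum f i := by
  have := hookLen_eq hf hn hij
  simp only [hookLen] at this
  omega

lemma betaNum_lt_gapNum (hf : Antitone f) (hn : f n = 0) {i j : ℕ} (hij : f i ≤ j) :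
    betaNum f i < gapNum f j := by
  have : ¬ i < colLen f j := fun h => ((lt_colLen_iff hf hn).mp h).not_ge hij
  simp only [betaNum, gapNum]
  omega

lemma gapNum_notMem_betaSet (hf : Antitone f) (hn : f n = 0) (j : ℕ) : gapNum f j ∉ betaSet f := by
  rintro ⟨i, hi⟩
  rcases lt_or_ge j (f i) with h | h
  · exact (gapNum_lt_betaNum hf hn h).ne hi.symm
  · exact (betaNum_lt_gapNum hf hn h).ne hi

lemma gapNum_strictMono (hn : f n = 0) : StrictMono (gapNum f) := by
  refine strictMono_nat_of_lt_succ fun j => ?_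
  have : colLen f (j + 1) ≤ colLen f j :=
    colLen_le_of_apply_le ((apply_colLen_le hn j).trans j.le_succ)
  simp only [gapNum]
  push_cast
  omega

lemma exists_gapNum_eq (hf : Antitone f) (hn : f n = 0) {c : ℤ} (hc : c ∉ betaSet f) :
    ∃ j, gapNum f j = c := by
  have hex : ∃ i, betaNum f i < c := ⟨n + (-c).toNat + 1, by
    have := hf (show n ≤ n + (-c).toNat + 1 by omega)
    simp only [betaNum]
    omega⟩
  set i := Nat.find hex
  have hi : betaNum f i < c := Nat.find_spec hex
  have hprev : ∀ i' < i, c < betaNum f i' := fun i' hi' =>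
    lt_of_le_of_ne (not_lt.mp (Nat.find_min hex hi')) fun h => hc ⟨i', h.symm⟩
  refine ⟨(c + i - 1).toNat, ?_⟩
  simp only [betaNum] at hi hprev
  have hcol : colLen f (c + i - 1).toNat = i := by
    refine le_antisymm (colLen_le_of_apply_le (by omega)) (not_lt.mp fun h => ?_)
    have := hprev (i - 1) (by omega)
    have := hf (show colLen f (c + i - 1).toNat ≤ i - 1 by omega)
    have := apply_colLen_le hn (c + i - 1).toNat
    omega
  simp only [gapNum, hcol]
  omega

lemma image_nodes_eq_hookPairs (hf : Antitone f) (hn : f n = 0) (p : ℕ) :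
    Prod.map (betaNum f) (gapNum f) '' {x | x.2 < f x.1 ∧ p ∣ hookLen f x.1 x.2} =
      hookPairs p (betaSet f) := by
  ext ⟨b, c⟩
  constructor
  · rintro ⟨⟨i, j⟩, ⟨hij, hdvd⟩, ⟨⟩⟩
    refine ⟨⟨⟨i, rfl⟩, gapNum_notMem_betaSet hf hn j, gapNum_lt_betaNum hf hn hij⟩, ?_⟩
    rw [← hookLen_eq hf hn hij]
    exact_mod_cast hdvd
  · rintro ⟨⟨⟨i, rfl⟩, hc, hcb⟩, hdvd⟩
    obtain ⟨j, rfl⟩ := exists_gapNum_eq hf hn hc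
    have hij : j < f i := not_le.mp fun h => (betaNum_lt_gapNum hf hn h).not_gt hcb
    refine ⟨(i, j), ⟨hij, ?_⟩, rfl⟩
    rw [← Int.natCast_dvd_natCast, hookLen_eq hf hn hij]
    exact hdvd

lemma pWeight_eq_ncard_hookPairs (hf : Antitone f) (hn : f n = 0) (p : ℕ) :
    pWeight p f = (hookPairs p (betaSet f)).ncard := by
  rw [← image_nodes_eq_hookPairs hf hn, Set.ncard_image_of_injective _
    ((betaNum_strictAnti hf).injective.prodMap (gapNum_strictMono hn).injective)]
  rfl

lemma hookPairs_betaSet_finite (hf : Antitone f) (hn : f n = 0) (p : ℕ) :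
    (hookPairs p (betaSet f)).Finite := by
  rw [← image_nodes_eq_hookPairs hf hn]
  refine (((Set.finite_Iio n).prod (Set.finite_Iio (f 0))).subset ?_).image _
  rintro ⟨i, j⟩ ⟨hij, -⟩
  simp only at hij
  exact ⟨not_le.mp fun h : n ≤ i => by have := hf h; omega, hij.trans_le (hf i.zero_le)⟩

theorem pWeight_eq_sum_runner {p : ℕ} [NeZero p] (hf : Antitone f) (hn : f n = 0) (a : ℤ) :
    pWeight p f = ∑ k ∈ range p, (inversions (runner p (betaSet f) (a + k))).ncard := by
  rw [pWeight_eq_ncard_hookPairs hf hn, ncard_hookPairs_eq_sum (hookPairs_betaSet_finite hf hn p)]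

end BetaNumbers

section Rows

variable {p : ℕ} {r : ZMod p} {f : ℕ → ℕ} {n : ℕ}

lemma eq_add_one_of_betaNum_eq_sub_one (hf : Antitone f) {i j : ℕ}
    (h : betaNum f j = betaNum f i - 1) : j = i + 1 := by
  have hij : i < j := (betaNum_strictAnti hf).lt_iff_gt.mp (by omega)
  by_contra hne
  have := betaNum_strictAnti hf (show i + 1 < j by omega)
  have := hf (Nat.le_add_right i 1)
  simp only [betaNum] at *
  omega

lemma betaNum_sub_one_mem_iff (hf : Antitone f) {i : ℕ} :
    betaNum f i - 1 ∈ betaSet f ↔ f (i + 1) = f i := by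
  refine ⟨fun ⟨j, hj⟩ => ?_, fun h => ⟨i + 1, by simp only [betaNum, h]; push_cast; ring⟩⟩
  obtain rfl := eq_add_one_of_betaNum_eq_sub_one hf hj
  simp only [betaNum] at hj
  omega

lemma betaNum_add_one_mem_iff (hf : Antitone f) {i : ℕ} :
    betaNum f i + 1 ∈ betaSet f ↔ i ≠ 0 ∧ f (i - 1) = f i := by
  refine ⟨fun ⟨j, hj⟩ => ?_, fun ⟨hi, h⟩ => ⟨i - 1, by simp only [betaNum, h]; omega⟩⟩
  obtain rfl := eq_add_one_of_betaNum_eq_sub_one hf (i := j) (j := i) (by omega)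
  simp only [betaNum] at hj
  simp only [ne_eq, Nat.add_one_ne_zero, not_false_eq_true, add_tsub_cancel_right, true_and]
  omega

lemma hasRemovable_iff (hf : Antitone f) {i : ℕ} :
    HasRemovable p r f i ↔ betaNum f i - 1 ∉ betaSet f ∧ (betaNum f i : ZMod p) = r + 1 := by
  have := hf (Nat.le_add_right i 1)
  rw [HasRemovable, betaNum_sub_one_mem_iff hf, betaNum]
  constructor
  · rintro ⟨hlt, hres⟩
    rw [Nat.cast_sub (by omega : 1 ≤ f i)] at hres
    refine ⟨by omega, ?_⟩
    push_cast
    linear_combination hres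
  · rintro ⟨hne, hres⟩
    refine ⟨by omega, ?_⟩
    rw [Nat.cast_sub (by omega : 1 ≤ f i)]
    push_cast at hres
    linear_combination hres

lemma hasAddable_iff (hf : Antitone f) {i : ℕ} :
    HasAddable p r f i ↔ betaNum f i + 1 ∉ betaSet f ∧ (betaNum f i : ZMod p) = r := by
  have := hf (i.sub_le 1)
  rw [HasAddable, betaNum_add_one_mem_iff hf, betaNum, Int.cast_sub, Int.cast_natCast,
    Int.cast_natCast]
  exact and_congr_left' (by omega)

lemma not_hasAddable_of_hasRemovable [Fact (1 < p)] (hf : Antitone f) {i : ℕ}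
    (h : HasRemovable p r f i) : ¬ HasAddable p r f i := fun h' => by
  simpa using ((hasRemovable_iff hf).mp h).2.symm.trans ((hasAddable_iff hf).mp h').2

lemma setOf_hasRemovable_finite (hf : Antitone f) (hn : f n = 0) :
    {i | HasRemovable p r f i}.Finite :=
  (Set.finite_Iio n).subset fun i hi => not_le.mp fun h : n ≤ i => by
    have := hf h
    have := hi.1
    omega

lemma setOf_hasAddable_finite (hf : Antitone f) (hn : f n = 0) :
    {i | HasAddable p r f i}.Finite :=
  (Set.finite_Iic n).subset fun i hi => not_lt.mp fun h : n < i => by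
    have := hf h.le
    have := hf (show n ≤ i - 1 by omega)
    rcases hi.1 with h0 | hlt <;> omega

theorem ncard_hasRemovable_le [Fact (1 < p)] (hf : Antitone f) (hn : f n = 0) :
    {i | HasRemovable p r f i}.ncard ≤
      {i | HasAddable p r f i}.ncard + {i | IsNormal p r f i}.ncard :=
  ncard_le_ncard_add_ncard_isNormalIn (fun _ => not_hasAddable_of_hasRemovable hf)
    (setOf_hasRemovable_finite hf hn) (setOf_hasAddable_finite hf hn)

end Rows

section RemoveNodes

variable {f : ℕ → ℕ} {n i : ℕ} {q : ℕ → Prop}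

noncomputable def removeLastNodes (f : ℕ → ℕ) (q : ℕ → Prop) (i : ℕ) : ℕ :=
  if q i then f i - 1 else f i

lemma removeLastNodes_of_pos (hi : q i) : removeLastNodes f q i = f i - 1 := if_pos hi

lemma removeLastNodes_of_neg (hi : ¬ q i) : removeLastNodes f q i = f i := if_neg hi

lemma removeLastNodes_le (i : ℕ) : removeLastNodes f q i ≤ f i := by
  by_cases hi : q i
  · rw [removeLastNodes_of_pos hi]
    omega
  · rw [removeLastNodes_of_neg hi]

lemma antitone_removeLastNodes (hf : Antitone f) (hq : ∀ i, q i → f (i + 1) < f i) :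
    Antitone (removeLastNodes f q) := by
  refine antitone_nat_of_succ_le fun i => ?_
  have := removeLastNodes_le (f := f) (q := q) (i + 1)
  by_cases hi : q i
  · rw [removeLastNodes_of_pos hi]
    have := hq i hi
    omega
  · rw [removeLastNodes_of_neg hi]
    exact this.trans (hf (Nat.le_add_right i 1))

lemma betaNum_removeLastNodes_of_pos (hq : ∀ i, q i → 0 < f i) (hi : q i) :
    betaNum (removeLastNodes f q) i = betaNum f i - 1 := by
  have := hq i hi
  rw [betaNum, betaNum, removeLastNodes_of_pos hi]
  omega

lemma betaNum_removeLastNodes_of_neg (hi : ¬ q i) :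
    betaNum (removeLastNodes f q) i = betaNum f i := by
  rw [betaNum, betaNum, removeLastNodes_of_neg hi]

lemma betaSet_removeLastNodes (hf : Antitone f) (hq : ∀ i, q i → 0 < f i) :
    betaSet (removeLastNodes f q) = slideDown (betaSet f) (betaNum f '' {i | q i}) := by
  ext x
  constructor
  · rintro ⟨i, rfl⟩
    by_cases hi : q i
    · exact Or.inr ⟨betaNum f i, ⟨i, hi, rfl⟩, (betaNum_removeLastNodes_of_pos hq hi).symm⟩
    · rw [betaNum_removeLastNodes_of_neg hi]
      refine Or.inl ⟨⟨i, rfl⟩, fun ⟨j, hj, hji⟩ => hi ?_⟩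
      rwa [← (betaNum_strictAnti hf).injective hji]
  · rintro (⟨⟨i, rfl⟩, hP⟩ | ⟨_, ⟨i, hi, rfl⟩, rfl⟩)
    · exact ⟨i, betaNum_removeLastNodes_of_neg fun hi => hP ⟨i, hi, rfl⟩⟩
    · exact ⟨i, betaNum_removeLastNodes_of_pos hq hi⟩

end RemoveNodes

section Abacus

variable {p : ℕ} {r : ZMod p} {f : ℕ → ℕ} {n : ℕ} {s : ℤ}

lemma Iio_subset_runner [NeZero p] {B : Set ℤ} {c t : ℤ} (hB : Set.Iic c ⊆ B) (ht : t ≤ 0)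
    (hst : s + t ≤ c) : Set.Iio t ⊆ runner p B s := fun m hm => hB <| by
  have hp : (1 : ℤ) ≤ p := by exact_mod_cast Nat.one_le_iff_ne_zero.mpr (NeZero.ne p)
  rw [Set.mem_Iio] at hm
  rw [Set.mem_Iic]
  nlinarith

lemma runner_inter_Ici_finite [NeZero p] {B : Set ℤ} (hB : ∀ c, (B ∩ Set.Ici c).Finite)
    (s t : ℤ) : (runner p B s ∩ Set.Ici t).Finite := by
  refine ((hB (s + p * t)).preimage (add_natCast_mul_injective p s).injOn).subset ?_
  rintro m ⟨hm, ht⟩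
  have hp : (0 : ℤ) ≤ p := by positivity
  rw [Set.mem_Ici] at ht
  exact ⟨hm, by rw [Set.mem_Ici]; nlinarith⟩

lemma ncard_runner_image_betaNum [NeZero p] (hf : Antitone f) {I : Set ℕ}
    (hI : ∀ i ∈ I, (betaNum f i : ZMod p) = s) : (runner p (betaNum f '' I) s).ncard = I.ncard := by
  rw [ncard_runner (by rintro _ ⟨i, hi, rfl⟩; exact hI i hi),
    Set.ncard_image_of_injective _ (betaNum_strictAnti hf).injective]

lemma runner_sdiff_eq_runner_removable (hf : Antitone f) (hs : (s : ZMod p) = r + 1) :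
    runner p (betaSet f) s \ runner p (betaSet f) (s - 1) =
      runner p (betaNum f '' {i | HasRemovable p r f i}) s := by
  ext m
  simp only [runner, Set.mem_sdiff, Set.mem_ofPred_eq, Set.mem_image, hasRemovable_iff hf]
  constructor
  · rintro ⟨⟨i, hi⟩, hm⟩
    refine ⟨i, ⟨?_, ?_⟩, hi⟩
    · rwa [hi, ← sub_add_eq_add_sub]
    · simp [hi, hs]
  · rintro ⟨i, ⟨hi, -⟩, him⟩
    exact ⟨⟨i, him⟩, by rwa [sub_add_eq_add_sub, ← him]⟩

lemma runner_sdiff_eq_runner_addable (hf : Antitone f) (hs : (s : ZMod p) = r + 1) :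
    runner p (betaSet f) (s - 1) \ runner p (betaSet f) s =
      runner p (betaNum f '' {i | HasAddable p r f i}) (s - 1) := by
  ext m
  simp only [runner, Set.mem_sdiff, Set.mem_ofPred_eq, Set.mem_image, hasAddable_iff hf]
  constructor
  · rintro ⟨⟨i, hi⟩, hm⟩
    refine ⟨i, ⟨?_, ?_⟩, hi⟩
    · rwa [hi, sub_add_eq_add_sub, sub_add_cancel]
    · simp [hi, hs]
  · rintro ⟨i, ⟨hi, -⟩, him⟩
    exact ⟨⟨i, him⟩, by rwa [him, sub_add_eq_add_sub, sub_add_cancel] at hi⟩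

lemma intCast_of_mem_image_isNormal (hf : Antitone f) (hs : (s : ZMod p) = r + 1) :
    ∀ x ∈ betaNum f '' {i | IsNormal p r f i}, (x : ZMod p) = s := by
  rintro _ ⟨i, hi, rfl⟩
  exact hs ▸ ((hasRemovable_iff hf).mp hi.1).2

theorem ncard_inversions_runner_slideDown_le [Fact (1 < p)] (hf : Antitone f) (hn : f n = 0)
    (hs : (s : ZMod p) = r + 1) :
    (inversions (runner p (slideDown (betaSet f) (betaNum f '' {i | IsNormal p r f i}))
        (s - 1))).ncard +
      (inversions (runner p (slideDown (betaSet f) (betaNum f '' {i | IsNormal p r f i}))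
        s)).ncard ≤
    (inversions (runner p (betaSet f) (s - 1))).ncard +
      (inversions (runner p (betaSet f) s)).ncard := by
  have hP := intCast_of_mem_image_isNormal hf hs
  rw [runner_slideDown_sub_one hP, runner_slideDown_self hP]
  have hlow := Iic_subset_betaSet hf hn
  have hfin := runner_inter_Ici_finite (p := p) (betaSet_inter_Ici_finite hf)
  refine ncard_inversions_transfer_le (t := min 0 (-n - s))
    (Iio_subset_runner hlow (min_le_left _ _) (by omega))
    (Iio_subset_runner hlow (min_le_left _ _) (by omega)) (hfin _ _) (hfin _ _) ?_ ?_
  · rintro m ⟨i, hi, him⟩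
    refine ⟨⟨i, him⟩, fun hm => ((hasRemovable_iff hf).mp hi.1).1 ?_⟩
    rwa [him, ← sub_add_eq_add_sub]
  · rw [runner_sdiff_eq_runner_removable hf hs, runner_sdiff_eq_runner_addable hf hs,
      ncard_runner_image_betaNum hf fun i hi => hs ▸ ((hasRemovable_iff hf).mp hi).2,
      ncard_runner_image_betaNum hf fun i hi => by
        rw [((hasAddable_iff hf).mp hi).2, Int.cast_sub, hs, Int.cast_one, add_sub_cancel_right],
      ncard_runner_image_betaNum hf fun i hi => hP _ ⟨i, hi, rfl⟩]
    exact ncard_hasRemovable_le hf hn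

end Abacus

lemma Finset.sum_range_le_sum_range_of_two {p : ℕ} (hp : 2 ≤ p) {u v : ℕ → ℕ}
    (h01 : u 0 + u 1 ≤ v 0 + v 1) (h : ∀ k, 2 ≤ k → k < p → u k = v k) :
    ∑ k ∈ range p, u k ≤ ∑ k ∈ range p, v k := by
  obtain ⟨q, rfl⟩ := Nat.exists_eq_add_of_le' hp
  rw [sum_range_succ', sum_range_succ', sum_range_succ', sum_range_succ', zero_add,
    sum_congr rfl fun k hk => h (k + 1 + 1) (by omega) (by simp at hk; omega)]
  omega

lemma intCast_sub_one_add_ne {p : ℕ} [Fact (1 < p)] {k : ℕ} (hk : 2 ≤ k) (hkp : k < p) (s : ℤ) :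
    ((s - 1 + k : ℤ) : ZMod p) ≠ s ∧ ((s - 1 + k : ℤ) : ZMod p) ≠ s - 1 := by
  have hval : ∀ j : ℕ, j < 2 → (k : ZMod p) ≠ j := fun j hj h => by
    have := congrArg ZMod.val h
    rw [ZMod.val_cast_of_lt hkp, ZMod.val_cast_of_lt (by omega)] at this
    omega
  push_cast
  constructor
  · intro h
    exact hval 1 one_lt_two (by push_cast; linear_combination h)
  · intro h
    exact hval 0 two_pos (by push_cast; linear_combination h)

theorem pWeight_removeNormals_le_general (p : ℕ) (hp : 2 ≤ p) (r : ZMod p) (f : ℕ → ℕ)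
    (hf : Antitone f) (hfin : (Function.support f).Finite) :
    pWeight p (fun i => if IsNormal p r f i then f i - 1 else f i) ≤ pWeight p f := by
  have : Fact (1 < p) := ⟨hp⟩
  obtain ⟨n, hn⟩ : ∃ n, f n = 0 := by simpa using hfin.exists_notMem
  obtain ⟨s, hs⟩ := ZMod.intCast_surjective (r + 1)
  have hrem : ∀ i, IsNormal p r f i → f (i + 1) < f i := fun i hi => hi.1.1
  change pWeight p (removeLastNodes f (IsNormal p r f)) ≤ _
  have hn' : removeLastNodes f (IsNormal p r f) n = 0 :=
    Nat.eq_zero_of_le_zero (hn ▸ removeLastNodes_le n)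
  rw [pWeight_eq_sum_runner (antitone_removeLastNodes hf hrem) hn' (s - 1),
    pWeight_eq_sum_runner hf hn (s - 1),
    betaSet_removeLastNodes hf fun i hi => (Nat.zero_le _).trans_lt (hrem i hi)]
  refine Finset.sum_range_le_sum_range_of_two hp ?_ fun k hk hkp => ?_
  · simpa using ncard_inversions_runner_slideDown_le hf hn hs
  · obtain ⟨hk1, hk0⟩ := intCast_sub_one_add_ne hk hkp s
    rw [runner_slideDown_of_ne (intCast_of_mem_image_isNormal hf hs) hk1 hk0]

/-- If `μ` has exactly `k` normal `r`-nodes, then removing all `k` of them yields a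
partition whose `p`-weight is at most the `p`-weight of `μ`. -/
theorem pWeight_removeNormals_le (p : ℕ) (hp : 2 ≤ p) (r : ZMod p) (f : ℕ → ℕ)
    (hf : Antitone f) (hfin : (Function.support f).Finite) (k : ℕ)
    (hk : Set.ncard {i | IsNormal p r f i} = k) :
    pWeight p (fun i => if IsNormal p r f i then f i - 1 else f i) ≤ pWeight p f :=
  pWeight_removeNormals_le_general p hp r f hf hfin
end

section
/- Let λ be a partition of weight w with p-core whose abacus (with a fixed number of beads) has all beads pushed up maximally. If w ≤ 3 and the p-core is empty (all runners have the same number of beads, at least w, pushed to the top), then for every residue r, λ has at most one removable r-node. -/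
open Finset

def holesBelow (T : Finset ℕ) (t : ℕ) : ℕ := #(range t \ T)

def pushUpDistance (T : Finset ℕ) : ℕ := ∑ t ∈ T, holesBelow T t

section PushUpDistance

variable {T : Finset ℕ}

lemma holesBelow_add_card_filter_lt (T : Finset ℕ) (t : ℕ) :
    holesBelow T t + #{x ∈ T | x < t} = t := by
  have hinter : range t ∩ T = {x ∈ T | x < t} := by
    ext x
    simp [and_comm]
  rw [holesBelow, ← hinter, card_sdiff_add_card_inter, card_range]

lemma holesBelow_insert_of_le {a t : ℕ} (h : t ≤ a) :
    holesBelow (insert a T) t = holesBelow T t := by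
  rw [holesBelow, sdiff_insert_of_notMem (by simpa using h)]
  rfl

lemma sum_eq_choose_two_add_pushUpDistance (T : Finset ℕ) :
    ∑ t ∈ T, t = (#T).choose 2 + pushUpDistance T := by
  induction T using Finset.induction_on_max with
  | empty => simp [pushUpDistance]
  | insert a T hlt ih =>
    have ha : a ∉ T := fun h => lt_irrefl a (hlt a h)
    have hbelow : holesBelow T a + #T = a := by
      simpa only [filter_true_of_mem hlt] using holesBelow_add_card_filter_lt T a
    have hpush : pushUpDistance (insert a T) = holesBelow T a + pushUpDistance T := by
      rw [pushUpDistance, sum_insert ha, holesBelow_insert_of_le le_rfl, pushUpDistance]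
      congr 1
      exact sum_congr rfl fun t ht => holesBelow_insert_of_le (hlt t ht).le
    have hchoose : (#T + 1).choose 2 = (#T).choose 1 + (#T).choose 2 := Nat.choose_succ_succ' _ _
    rw [Nat.choose_one_right] at hchoose
    rw [sum_insert ha, card_insert_of_notMem ha, hchoose, hpush, ih]
    omega

lemma sum_card_filter_gt_le_pushUpDistance {H : Finset ℕ} (hH : Disjoint H T) :
    ∑ j ∈ H, #{t ∈ T | j < t} ≤ pushUpDistance T := by
  calc ∑ j ∈ H, #{t ∈ T | j < t}
      = ∑ t ∈ T, #{j ∈ H | j < t} := by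
        simp only [card_filter]
        exact sum_comm
    _ ≤ ∑ t ∈ T, holesBelow T t := by
        refine sum_le_sum fun t _ => card_le_card fun j hj => ?_
        rw [mem_filter] at hj
        exact mem_sdiff.2 ⟨mem_range.2 hj.2, disjoint_left.1 hH hj.1⟩

lemma add_add_three_le_pushUpDistance {a b : ℕ} (ha : a ∈ T) (hb : b ∈ T) (hab : a < b) :
    a + b + 3 ≤ pushUpDistance T + 2 * #T := by
  have hsum : holesBelow T a + holesBelow T b ≤ pushUpDistance T := by
    rw [← sum_pair hab.ne]
    exact sum_le_sum_of_subset (insert_subset ha (singleton_subset_iff.2 hb))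
  have hlt_a : #{x ∈ T | x < a} < #{x ∈ T | x < b} := by
    refine card_lt_card ((ssubset_iff_of_subset fun x hx => ?_).2 ⟨a, ?_, ?_⟩)
    · rw [mem_filter] at hx ⊢
      exact ⟨hx.1, hx.2.trans hab⟩
    · simp [ha, hab]
    · simp
  have hlt_b : #{x ∈ T | x < b} < #T :=
    card_lt_card ((ssubset_iff_of_subset (filter_subset _ _)).2 ⟨b, hb, by simp⟩)
  have := holesBelow_add_card_filter_lt T a
  have := holesBelow_add_card_filter_lt T b
  omega

lemma card_filter_gt_add_card_filter_lt {a : ℕ} (ha : a ∉ T) :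
    #{t ∈ T | a < t} + #{t ∈ T | t < a} = #T := by
  rw [← card_filter_add_card_filter_not (s := T) (fun t => a < t)]
  congr 1
  refine congrArg card (filter_congr fun t ht => ?_)
  have := ne_of_mem_of_not_mem ht ha
  omega

lemma two_mul_card_add_one_le_pushUpDistance {a b : ℕ} (ha : a ∉ T) (hb : b ∉ T)
    (hab : a < b) : 2 * #T + 1 ≤ pushUpDistance T + a + b := by
  have hsum : #{t ∈ T | a < t} + #{t ∈ T | b < t} ≤ pushUpDistance T := by
    rw [← sum_pair (f := fun j => #{t ∈ T | j < t}) hab.ne]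
    exact sum_card_filter_gt_le_pushUpDistance
      (disjoint_insert_left.2 ⟨ha, disjoint_singleton_left.2 hb⟩)
  have hhole : 0 < holesBelow T b := card_pos.2 ⟨a, mem_sdiff.2 ⟨mem_range.2 hab, ha⟩⟩
  have := card_filter_gt_add_card_filter_lt ha
  have := card_filter_gt_add_card_filter_lt hb
  have := holesBelow_add_card_filter_lt T a
  have := holesBelow_add_card_filter_lt T b
  omega

end PushUpDistance

def runnerLevels (p : ℕ) (S : Finset ℕ) (s : ℕ) : Finset ℕ :=
  (S.filter (fun m => m % p = s)).image (fun m => m / p)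

section Abacus

variable {p : ℕ} {S : Finset ℕ}

lemma div_lt_div_of_lt_of_mod_eq {m n : ℕ} (hlt : m < n) (hmod : m % p = n % p) :
    m / p < n / p := by
  by_contra hle
  have hmul : p * (n / p) ≤ p * (m / p) := Nat.mul_le_mul_left p (not_lt.1 hle)
  have := Nat.div_add_mod m p
  have := Nat.div_add_mod n p
  omega

lemma sub_one_mod_ne_mod (hp : 2 ≤ p) {m : ℕ} (hm : 0 < m) : (m - 1) % p ≠ m % p := by
  intro h
  have hdvd : p ∣ m - (m - 1) := (Nat.modEq_iff_dvd' (Nat.sub_le m 1)).1 h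
  rw [Nat.sub_sub_self hm] at hdvd
  exact absurd (Nat.le_of_dvd one_pos hdvd) (by omega)

lemma div_mem_runnerLevels_mod_iff {m : ℕ} : m / p ∈ runnerLevels p S (m % p) ↔ m ∈ S := by
  constructor
  · intro h
    obtain ⟨n, hn, hdiv⟩ := mem_image.1 h
    rw [mem_filter] at hn
    exact Nat.ext_div_mod hdiv hn.2 ▸ hn.1
  · intro h
    exact mem_image.2 ⟨m, mem_filter.2 ⟨h, rfl⟩, rfl⟩

lemma injOn_div_filter_mod_eq (s : ℕ) :
    Set.InjOn (fun m => m / p) (S.filter (fun m => m % p = s) : Set ℕ) := by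
  intro m hm n hn hdiv
  simp only [coe_filter, Set.mem_ofPred_eq] at hm hn
  exact Nat.ext_div_mod hdiv (hm.2.trans hn.2.symm)

lemma card_runnerLevels (s : ℕ) : #(runnerLevels p S s) = #(S.filter (fun m => m % p = s)) :=
  card_image_of_injOn (injOn_div_filter_mod_eq s)

lemma abacusWeight_eq_sum_pushUpDistance (hp : 0 < p) :
    abacusWeight p S = ∑ s ∈ range p, (pushUpDistance (runnerLevels p S s) : ℤ) := by
  have hrunner : ∀ s, ∑ m ∈ S.filter (fun m => m % p = s), m / p
      = (#(S.filter (fun m => m % p = s))).choose 2 + pushUpDistance (runnerLevels p S s) := by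
    intro s
    rw [← card_runnerLevels, ← sum_eq_choose_two_add_pushUpDistance, runnerLevels,
      sum_image (injOn_div_filter_mod_eq s)]
  have hfiber : ∑ m ∈ S, m / p = ∑ s ∈ range p, ∑ m ∈ S.filter (fun m => m % p = s), m / p :=
    (sum_fiberwise_of_maps_to (fun m _ => mem_range.2 (Nat.mod_lt m hp)) _).symm
  have hcast : ∑ m ∈ S, (m / p : ℤ) = ((∑ m ∈ S, m / p : ℕ) : ℤ) := by
    push_cast
    rfl
  rw [abacusWeight, hcast, hfiber, sum_congr rfl fun s _ => hrunner s]
  push_cast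
  rw [sum_add_distrib, add_sub_cancel_left]

lemma four_le_pushUpDistance_add_of_removable {m₁ m₂ : ℕ} (hm₁ : m₁ ∈ S) (hm₂ : m₂ ∈ S)
    (hm₁' : m₁ - 1 ∉ S) (hm₂' : m₂ - 1 ∉ S) (hpos : 0 < m₁) (hlt : m₁ < m₂)
    (hmod : m₁ % p = m₂ % p)
    (hcard : #(runnerLevels p S (m₁ % p)) ≤ #(runnerLevels p S ((m₁ - 1) % p))) :
    4 ≤ pushUpDistance (runnerLevels p S (m₁ % p))
      + pushUpDistance (runnerLevels p S ((m₁ - 1) % p)) := by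
  have hmod' : (m₁ - 1) % p = (m₂ - 1) % p :=
    Nat.ModEq.add_right_cancel' 1 (by rwa [Nat.sub_add_cancel hpos, Nat.sub_add_cancel (by omega)])
  have hbeads := add_add_three_le_pushUpDistance (div_mem_runnerLevels_mod_iff.2 hm₁)
    (hmod ▸ div_mem_runnerLevels_mod_iff.2 hm₂) (div_lt_div_of_lt_of_mod_eq hlt hmod)
  have hgaps := two_mul_card_add_one_le_pushUpDistance
    (mt div_mem_runnerLevels_mod_iff.1 hm₁') (hmod' ▸ mt div_mem_runnerLevels_mod_iff.1 hm₂')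
    (div_lt_div_of_lt_of_mod_eq (by omega : m₁ - 1 < m₂ - 1) hmod')
  have h₁ : (m₁ - 1) / p ≤ m₁ / p := Nat.div_le_div_right (Nat.sub_le m₁ 1)
  have h₂ : (m₂ - 1) / p ≤ m₂ / p := Nat.div_le_div_right (Nat.sub_le m₂ 1)
  omega

end Abacus

/-- If `w ≤ 3` and `λ` (with abacus configuration `S`) lies in the principal block,
i.e. its `p`-core is empty (every runner carries exactly `w` beads) and its weight
is `w`, then for every residue `r` the partition `λ` has at most one removable
`r`-node, i.e. at most one bead on runner `r` can move one space to the left. -/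
theorem at_most_one_removable_of_weight_le_three (p w : ℕ) (S : Finset ℕ)
    (hp : 2 ≤ p) (hw : w ≤ 3)
    (hcounts : ∀ r < p, (S.filter (fun m => m % p = r)).card = w)
    (hweight : abacusWeight p S = (w : ℤ)) :
    ∀ r < p, (S.filter (fun m => m % p = r ∧ 0 < m ∧ m - 1 ∉ S)).card ≤ 1 := by
  intro r _
  have htotal : ∑ s ∈ range p, pushUpDistance (runnerLevels p S s) = w := by
    have h := abacusWeight_eq_sum_pushUpDistance (S := S) (by omega : 0 < p)
    rw [hweight] at h
    exact_mod_cast h.symm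
  refine card_le_one.2 fun m₁ hm₁ m₂ hm₂ => by_contra fun hne => ?_
  wlog hlt : m₁ < m₂ generalizing m₁ m₂
  · exact this m₂ hm₂ m₁ hm₁ (Ne.symm hne) (by omega)
  simp only [mem_filter] at hm₁ hm₂
  obtain ⟨hm₁S, rfl, hpos, hm₁'⟩ := hm₁
  obtain ⟨hm₂S, hmod, -, hm₂'⟩ := hm₂
  have hmod_lt : ∀ m, m % p < p := fun m => Nat.mod_lt m (by omega)
  have hfour := four_le_pushUpDistance_add_of_removable hm₁S hm₂S hm₁' hm₂' hpos hlt hmod.symm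
    (by rw [card_runnerLevels, card_runnerLevels, hcounts _ (hmod_lt _), hcounts _ (hmod_lt _)])
  have hpair : pushUpDistance (runnerLevels p S (m₁ % p))
      + pushUpDistance (runnerLevels p S ((m₁ - 1) % p)) ≤ w := by
    rw [← sum_pair (f := fun s => pushUpDistance (runnerLevels p S s))
      (sub_one_mod_ne_mod hp hpos).symm, ← htotal]
    exact sum_le_sum_of_subset
      (insert_subset (mem_range.2 (hmod_lt _)) (singleton_subset_iff.2 (mem_range.2 (hmod_lt _))))
  omega
end

section
/- Let λ and μ be partitions of n with the same p-core represented on an abacus with the same number of beads. Suppose the p-weight of λ is w and that of μ is w with p > w. Then no hook length of λ is divisible by p². -/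
lemma colLen_key (f : ℕ → ℕ) (hf : Antitone f) (hfin : (Function.support f).Finite)
    (i j : ℕ) : j < f i ↔ i < Set.ncard {i' | j < f i'} := by
  have hT : {i' | j < f i'}.Finite :=
    hfin.subset fun x hx => by
      simp only [Function.mem_support]
      exact Nat.pos_iff_ne_zero.mp (Nat.lt_of_le_of_lt (Nat.zero_le j) hx)
  constructor
  · intro h
    have hsub : Set.Iic i ⊆ {i' | j < f i'} := fun x hx => lt_of_lt_of_le h (hf hx)
    have h1 : (Set.Iic i).ncard = i + 1 := by
      rw [← Finset.coe_Iic, Set.ncard_coe_finset, Nat.card_Iic]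
    have := Set.ncard_le_ncard hsub hT
    omega
  · intro h
    by_contra hc
    push_neg at hc
    have hsub : {i' | j < f i'} ⊆ Set.Iio i := by
      intro x hx
      simp only [Set.mem_Iio]
      by_contra hxi
      push_neg at hxi
      exact absurd (lt_of_lt_of_le hx (le_trans (hf hxi) hc)) (lt_irrefl j)
    have h1 : (Set.Iio i).ncard = i := by
      rw [← Finset.coe_Iio, Set.ncard_coe_finset, Nat.card_Iio]
    have := Set.ncard_le_ncard hsub (Set.finite_Iio i)
    omega


/-- If a partition `λ` has `p`-weight `w < p`, then no hook length of `λ` is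
divisible by `p²`. -/
theorem no_hook_div_p_sq (p w : ℕ) (hp : p.Prime) (f : ℕ → ℕ)
    (hf : Antitone f) (hfin : (Function.support f).Finite)
    (hw : pWeight p f = w) (hwp : w < p) :
    ∀ i j, j < f i → ¬ (p ^ 2 ∣ hookLen f i j) := by
  intro i j hij hdvd
  set C : ℕ → ℕ := fun j' => Set.ncard {i' | j' < f i'} with hCdef
  have key : ∀ i' j', j' < f i' ↔ i' < C j' := fun i' j' => colLen_key f hf hfin i' j'
  have hCanti : Antitone C := by
    intro j1 j2 h12
    refine Set.ncard_le_ncard (fun x hx => lt_of_le_of_lt h12 hx) ?_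
    exact hfin.subset fun x hx => by
      simp only [Function.mem_support]
      exact Nat.pos_iff_ne_zero.mp (Nat.lt_of_le_of_lt (Nat.zero_le j1) hx)
  have hhook : ∀ i' j', hookLen f i' j' = (f i' - (j' + 1)) + (C j' - (i' + 1)) + 1 := by
    intro i' j'
    simp only [hookLen, hCdef]
    omega
  set h := hookLen f i j with hhdef
  -- strict decrease along a row
  have row_strict : ∀ i0 j1 j2, j1 < j2 → j2 < f i0 → hookLen f i0 j2 < hookLen f i0 j1 := by
    intro i0 j1 j2 h12 h2
    have h1 : j1 < f i0 := lt_trans h12 h2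
    have e1 := hhook i0 j1
    have e2 := hhook i0 j2
    have hc : C j2 ≤ C j1 := hCanti (le_of_lt h12)
    have hk2 : i0 < C j2 := (key i0 j2).mp h2
    omega
  -- strict decrease along a column
  have col_strict : ∀ j0 i1 i2, i1 < i2 → i2 < C j0 → hookLen f i2 j0 < hookLen f i1 j0 := by
    intro j0 i1 i2 h12 h2
    have hf2 : j0 < f i2 := (key i2 j0).mpr h2
    have hf1 : j0 < f i1 := lt_of_lt_of_le hf2 (hf (le_of_lt h12))
    have e1 := hhook i1 j0
    have e2 := hhook i2 j0
    have hfm : f i2 ≤ f i1 := hf (le_of_lt h12)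
    omega
  -- h = p * m with p ≤ m
  obtain ⟨k, hk⟩ := hdvd
  have hpos : 1 ≤ h := by rw [hhdef, hhook]; omega
  have hk1 : 1 ≤ k := by
    rcases Nat.eq_zero_or_pos k with h0 | h0
    · rw [h0, Nat.mul_zero] at hk; omega
    · exact h0
  set m := p * k with hmdef
  have hm : h = p * m := by rw [hk, hmdef]; ring
  have hmp : p ≤ m := by
    calc p = p * 1 := (Nat.mul_one p).symm
    _ ≤ p * k := Nat.mul_le_mul_left p hk1
  have hp2 : 2 ≤ p := hp.two_le
  -- the two finsets of hook lengths
  set A : Finset ℕ := (Finset.Ico (j + 1) (f i)).image (fun j' => hookLen f i j') with hAdef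
  set B : Finset ℕ := (Finset.Ico (i + 1) (C j)).image (fun i' => h - hookLen f i' j) with hBdef
  have hiCj : i < C j := (key i j).mp hij
  have hAcard : A.card = f i - (j + 1) := by
    rw [hAdef, Finset.card_image_of_injOn, Nat.card_Ico]
    intro x hx y hy hxy
    simp only [Finset.coe_Ico, Set.mem_Ico] at hx hy
    by_contra hne
    rcases Nat.lt_or_ge x y with hlt | hge
    · exact absurd hxy (Nat.ne_of_gt (row_strict i x y hlt hy.2))
    · have : y < x := lt_of_le_of_ne hge (Ne.symm hne)
      exact absurd hxy (Nat.ne_of_lt (row_strict i y x this hx.2))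
  have hlegle : ∀ i' ∈ Finset.Ico (i + 1) (C j), hookLen f i' j < h := by
    intro i' hi'
    simp only [Finset.mem_Ico] at hi'
    exact col_strict j i i' hi'.1 hi'.2
  have hBcard : B.card = C j - (i + 1) := by
    rw [hBdef, Finset.card_image_of_injOn, Nat.card_Ico]
    intro x hx y hy hxy
    simp only [Finset.coe_Ico, Set.mem_Ico] at hx hy
    simp only at hxy
    have hx' : hookLen f x j < h := col_strict j i x hx.1 hx.2
    have hy' : hookLen f y j < h := col_strict j i y hy.1 hy.2
    have heq : hookLen f x j = hookLen f y j := by omega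
    by_contra hne
    rcases Nat.lt_or_ge x y with hlt | hge
    · exact absurd heq (Nat.ne_of_gt (col_strict j x y hlt hy.2))
    · have : y < x := lt_of_le_of_ne hge (Ne.symm hne)
      exact absurd heq (Nat.ne_of_lt (col_strict j y x this hx.2))
  have hAsub : A ⊆ Finset.Ico 1 h := by
    intro a ha
    rw [hAdef, Finset.mem_image] at ha
    obtain ⟨j', hj', rfl⟩ := ha
    simp only [Finset.mem_Ico] at hj'
    rw [Finset.mem_Ico]
    constructor
    · rw [hhook]; omega
    · exact row_strict i j j' (by omega) hj'.2
  have hBsub : B ⊆ Finset.Ico 1 h := by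
    intro a ha
    rw [hBdef, Finset.mem_image] at ha
    obtain ⟨i', hi', rfl⟩ := ha
    have h1 := hlegle i' hi'
    have h2 : 1 ≤ hookLen f i' j := by rw [hhook]; omega
    rw [Finset.mem_Ico]
    omega
  have hdisj : Disjoint A B := by
    rw [Finset.disjoint_left]
    intro a haA haB
    rw [hAdef, Finset.mem_image] at haA
    rw [hBdef, Finset.mem_image] at haB
    obtain ⟨j', hj', hja⟩ := haA
    obtain ⟨i', hi', hia⟩ := haB
    simp only [Finset.mem_Ico] at hj' hi'
    have hji' : j < f i' := (key i' j).mpr hi'.2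
    have hlt := col_strict j i i' hi'.1 hi'.2
    have e1 := hhook i j'
    have e2 := hhook i' j
    have e0 := hhook i j
    have hki : i < C j' := (key i j').mp hj'.2
    have hcm : C j' ≤ C j := hCanti (by omega)
    rcases Nat.lt_or_ge j' (f i') with hcase | hcase
    · have hki' : i' < C j' := (key i' j').mp hcase
      omega
    · have hki' : C j' ≤ i' := by
        by_contra hcc
        push_neg at hcc
        exact absurd ((key i' j').mpr hcc) (by omega)
      omega
  have hcover : A ∪ B = Finset.Ico 1 h := by
    apply Finset.eq_of_subset_of_card_le (Finset.union_subset hAsub hBsub)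
    rw [Finset.card_union_of_disjoint hdisj, hAcard, hBcard, Nat.card_Ico]
    have e0 := hhook i j
    omega
  -- choice of m distinct nodes with p-divisible hooks
  have hnode : ∀ t : Fin m, ∃ x : ℕ × ℕ, x.2 < f x.1 ∧ p ∣ hookLen f x.1 x.2 ∧
      ((x.1 = i ∧ j < x.2 ∧ hookLen f x.1 x.2 = p * t.1) ∨
       (x.2 = j ∧ hookLen f x.1 x.2 = p * (m - t.1))) := by
    intro t
    rcases Nat.eq_zero_or_pos t.1 with h0 | h0
    · exact ⟨(i, j), hij, ⟨m, hm⟩, Or.inr ⟨rfl, by rw [h0, Nat.sub_zero]; exact hm⟩⟩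
    · have hmem : p * t.1 ∈ Finset.Ico 1 h := by
        rw [Finset.mem_Ico]
        constructor
        · have := Nat.mul_pos (show 0 < p by omega) h0
          omega
        · rw [hm]
          exact (mul_lt_mul_iff_right₀ (show 0 < p by omega)).mpr t.2
      rw [← hcover, Finset.mem_union] at hmem
      rcases hmem with hA | hB
      · rw [hAdef, Finset.mem_image] at hA
        obtain ⟨j', hj', hja⟩ := hA
        simp only [Finset.mem_Ico] at hj'
        exact ⟨(i, j'), hj'.2, ⟨t.1, by simpa using hja⟩, Or.inl ⟨rfl, by omega, by simpa using hja⟩⟩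
      · rw [hBdef, Finset.mem_image] at hB
        obtain ⟨i', hi', hia⟩ := hB
        have hji' : j < f i' := (key i' j).mpr (Finset.mem_Ico.mp hi').2
        have hlt := hlegle i' hi'
        have hval : hookLen f i' j = p * (m - t.1) := by
          have h2 : p * (m - t.1) + p * t.1 = p * m := by
            rw [← Nat.mul_add, Nat.sub_add_cancel (le_of_lt t.2)]
          omega
        exact ⟨(i', j), hji', ⟨m - t.1, hval⟩, Or.inr ⟨rfl, hval⟩⟩
  choose N hN1 hN2 hN3 using hnode
  have hNinj : Function.Injective N := by
    intro t1 t2 heq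
    rcases hN3 t1 with ⟨h1a, h1b, h1c⟩ | ⟨h1a, h1b⟩ <;>
      rcases hN3 t2 with ⟨h2a, h2b, h2c⟩ | ⟨h2a, h2b⟩
    · apply Fin.ext
      have : p * t1.1 = p * t2.1 := by rw [← h1c, ← h2c, heq]
      exact Nat.eq_of_mul_eq_mul_left (by omega) this
    · exfalso; rw [heq, h2a] at h1b; omega
    · exfalso; rw [← heq, h1a] at h2b; omega
    · apply Fin.ext
      have : p * (m - t1.1) = p * (m - t2.1) := by rw [← h1b, ← h2b, heq]
      have := Nat.eq_of_mul_eq_mul_left (by omega : 0 < p) this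
      have ht1 := t1.2
      have ht2 := t2.2
      omega
  -- the set of p-divisible hooks is finite
  set S : Set (ℕ × ℕ) := {x : ℕ × ℕ | x.2 < f x.1 ∧ p ∣ hookLen f x.1 x.2} with hSdef
  have hSfin : S.Finite := by
    apply Set.Finite.subset (Set.Finite.prod hfin (Set.finite_Iio (f 0)))
    intro x hx
    rw [hSdef] at hx
    constructor
    · simp only [Function.mem_support]
      exact Nat.pos_iff_ne_zero.mp (Nat.lt_of_le_of_lt (Nat.zero_le _) hx.1)
    · exact lt_of_lt_of_le hx.1 (hf (Nat.zero_le x.1))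
  -- count
  have hrange : ∀ t : Fin m, N t ∈ hSfin.toFinset := by
    intro t
    rw [Set.Finite.mem_toFinset]
    exact ⟨hN1 t, hN2 t⟩
  have hcard : m ≤ hSfin.toFinset.card := by
    have := Finset.card_le_card (fun x hx => by
      rw [Finset.mem_image] at hx
      obtain ⟨t, _, rfl⟩ := hx
      exact hrange t : (Finset.univ : Finset (Fin m)).image N ⊆ hSfin.toFinset)
    rwa [Finset.card_image_of_injective _ hNinj, Finset.card_univ, Fintype.card_fin] at this
  have hS : S.ncard = w := by rw [hSdef]; exact hw
  rw [Set.ncard_eq_toFinset_card S hSfin] at hS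
  omega
end

section
/- In Case 3 with parameters i, j, k (satisfying 2 < i+1 < j ≤ k ≤ p+1), the four exceptional partitions α = (2p−k−j+3i+2, (p−k+2i+1)^{j−i−2}, p−k+2i, i^{k−i}, 1^{p−i}), β = (2p−k−j+3i+2, (p−k+2i+1)^{j−i−2}, p−k+2i, i^{k−i−1}, i−1, 1^{p−i+1}), γ = (2p−k−j+3i+1, (p−k+2i+1)^{j−i−1}, i^{k−i}, 1^{p−i}), δ = (2p−k−j+3i+1, (p−k+2i+1)^{j−i−1}, i^{k−i−1}, i−1, 1^{p−i+1}) satisfy: α strictly dominates β, β strictly dominates δ, α strictly dominates γ, γ strictly dominates δ, but β does not dominate γ and γ does not dominate β. -/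
/-- `a` dominates `b` (as partitions written as weakly decreasing lists of parts):
every partial sum of `a` is at least the corresponding partial sum of `b`. -/
def Dominates (a b : List ℕ) : Prop := ∀ m, (b.take m).sum ≤ (a.take m).sum

lemma sum_take_append (l t : List ℕ) (m : ℕ) :
    ((l ++ t).take m).sum = (l.take m).sum + (t.take (m - l.length)).sum := by
  rw [List.take_append, List.sum_append]

lemma sum_take_replicate (n x m : ℕ) :
    ((List.replicate n x).take m).sum = min m n * x := by
  rw [List.take_replicate, List.sum_replicate, smul_eq_mul]

lemma dom_append_iff (l a b : List ℕ) : Dominates (l ++ a) (l ++ b) ↔ Dominates a b := by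
  constructor
  · intro h m
    have := h (l.length + m)
    rwa [sum_take_append, sum_take_append, List.take_of_length_le (by omega),
      Nat.add_sub_cancel_left, Nat.add_le_add_iff_left] at this
  · intro h m
    rw [sum_take_append, sum_take_append]
    exact Nat.add_le_add_left (h _) _

lemma lemB (i q : ℕ) (hi : 1 ≤ i) :
    Dominates (i :: List.replicate q 1) ((i - 1) :: List.replicate (q + 1) 1) := by
  intro m
  cases m with
  | zero => simp
  | succ m =>
    simp only [List.take_succ_cons, List.sum_cons, sum_take_replicate, mul_one]
    omega

lemma lemB' (i q : ℕ) (hi : 1 ≤ i) :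
    ¬ Dominates ((i - 1) :: List.replicate (q + 1) 1) (i :: List.replicate q 1) := by
  intro h
  have := h 1
  simp at this
  omega

lemma lemC (x y : ℕ) (l T : List ℕ) :
    Dominates ((x + 1) :: (l ++ y :: T)) (x :: (l ++ (y + 1) :: T)) := by
  intro m
  cases m with
  | zero => simp
  | succ m =>
    simp only [List.take_succ_cons, List.sum_cons, sum_take_append]
    have : (((y + 1) :: T).take (m - l.length)).sum ≤ ((y :: T).take (m - l.length)).sum + 1 := by
      cases h : m - l.length with
      | zero => simp
      | succ n => simp [List.take_succ_cons]; omega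
    omega

lemma lemC' (x : ℕ) (A B : List ℕ) : ¬ Dominates (x :: A) ((x + 1) :: B) := by
  intro h
  have := h 1
  simp at this

lemma not_dom_beta_gamma (x c n1 K q I : ℕ) :
    ¬ Dominates
      ((x + 1) :: (List.replicate n1 (c + 1) ++ c ::
        (List.replicate K (I + 1) ++ I :: List.replicate (q + 1) 1)))
      (x :: (List.replicate (n1 + 1) (c + 1) ++
        (List.replicate (K + 1) (I + 1) ++ List.replicate q 1))) := by
  intro h
  have h2 := h (n1 + K + 3)
  have hg : (x :: (List.replicate (n1 + 1) (c + 1) ++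
      (List.replicate (K + 1) (I + 1) ++ List.replicate q 1))).take (n1 + K + 3)
      = x :: (List.replicate (n1 + 1) (c + 1) ++ List.replicate (K + 1) (I + 1)) := by
    have : (x :: (List.replicate (n1 + 1) (c + 1) ++
        (List.replicate (K + 1) (I + 1) ++ List.replicate q 1)))
        = (x :: (List.replicate (n1 + 1) (c + 1) ++ List.replicate (K + 1) (I + 1)))
          ++ List.replicate q 1 := by
      simp [List.append_assoc]
    rw [this, List.take_left' (by simp; omega)]
  have hb : ((x + 1) :: (List.replicate n1 (c + 1) ++ c ::
      (List.replicate K (I + 1) ++ I :: List.replicate (q + 1) 1))).take (n1 + K + 3)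
      = (x + 1) :: (List.replicate n1 (c + 1) ++ c :: (List.replicate K (I + 1) ++ [I])) := by
    have : ((x + 1) :: (List.replicate n1 (c + 1) ++ c ::
        (List.replicate K (I + 1) ++ I :: List.replicate (q + 1) 1)))
        = ((x + 1) :: (List.replicate n1 (c + 1) ++ c :: (List.replicate K (I + 1) ++ [I])))
          ++ List.replicate (q + 1) 1 := by
      simp [List.append_assoc]
    rw [this, List.take_left' (by simp; omega)]
  rw [hg, hb] at h2
  simp only [List.sum_cons, List.sum_append, List.sum_replicate, smul_eq_mul,
    List.sum_singleton, List.sum_nil] at h2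
  have e1 : (n1 + 1) * (c + 1) = n1 * (c + 1) + (c + 1) := by ring
  have e2 : (K + 1) * (I + 1) = K * (I + 1) + (I + 1) := by ring
  rw [e1, e2] at h2
  generalize n1 * (c + 1) = A at h2
  generalize K * (I + 1) = B at h2
  omega

/-- In Case 3 with parameters `2 < i + 1 < j ≤ k ≤ p + 1`, the four exceptional
partitions
`α = (2p-k-j+3i+2, (p-k+2i+1)^{j-i-2}, p-k+2i, i^{k-i}, 1^{p-i})`,
`β = (2p-k-j+3i+2, (p-k+2i+1)^{j-i-2}, p-k+2i, i^{k-i-1}, i-1, 1^{p-i+1})`,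
`γ = (2p-k-j+3i+1, (p-k+2i+1)^{j-i-1}, i^{k-i}, 1^{p-i})`,
`δ = (2p-k-j+3i+1, (p-k+2i+1)^{j-i-1}, i^{k-i-1}, i-1, 1^{p-i+1})`
satisfy `α ⊳ β ⊳ δ` and `α ⊳ γ ⊳ δ`, while `β` and `γ` are incomparable. -/
theorem case3_exceptional_dominance (p i j k : ℕ) (hp : p.Prime) (hp3 : 3 < p)
    (hi : 2 < i + 1) (hij : i + 1 < j) (hjk : j ≤ k) (hk : k ≤ p + 1) :
    let alpha := (2 * p + 3 * i + 2 - j - k) ::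
      (List.replicate (j - i - 2) (p + 2 * i + 1 - k) ++ (p + 2 * i - k) ::
        (List.replicate (k - i) i ++ List.replicate (p - i) 1))
    let beta := (2 * p + 3 * i + 2 - j - k) ::
      (List.replicate (j - i - 2) (p + 2 * i + 1 - k) ++ (p + 2 * i - k) ::
        (List.replicate (k - i - 1) i ++ (i - 1) :: List.replicate (p - i + 1) 1))
    let gamma := (2 * p + 3 * i + 1 - j - k) ::
      (List.replicate (j - i - 1) (p + 2 * i + 1 - k) ++
        (List.replicate (k - i) i ++ List.replicate (p - i) 1))
    let delta := (2 * p + 3 * i + 1 - j - k) ::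
      (List.replicate (j - i - 1) (p + 2 * i + 1 - k) ++
        (List.replicate (k - i - 1) i ++ (i - 1) :: List.replicate (p - i + 1) 1))
    (Dominates alpha beta ∧ ¬ Dominates beta alpha) ∧
    (Dominates beta delta ∧ ¬ Dominates delta beta) ∧
    (Dominates alpha gamma ∧ ¬ Dominates gamma alpha) ∧
    (Dominates gamma delta ∧ ¬ Dominates delta gamma) ∧
    ¬ Dominates beta gamma ∧ ¬ Dominates gamma beta := by
  intro alpha beta gamma delta
  obtain ⟨x, hx⟩ : ∃ x, 2 * p + 3 * i + 1 - j - k = x := ⟨_, rfl⟩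
  have hx1 : 2 * p + 3 * i + 2 - j - k = x + 1 := by omega
  obtain ⟨c, hc⟩ : ∃ c, p + 2 * i - k = c := ⟨_, rfl⟩
  have hc1 : p + 2 * i + 1 - k = c + 1 := by omega
  obtain ⟨n1, hn1⟩ : ∃ n, j - i - 2 = n := ⟨_, rfl⟩
  have hn1' : j - i - 1 = n1 + 1 := by omega
  obtain ⟨K, hK⟩ : ∃ K, k - i - 1 = K := ⟨_, rfl⟩
  have hK' : k - i = K + 1 := by omega
  obtain ⟨q, hq⟩ : ∃ q, p - i = q := ⟨_, rfl⟩
  have hq' : p - i + 1 = q + 1 := by omega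
  have hi1 : 1 ≤ i := by omega
  -- canonical forms
  have ea : alpha = (x + 1) :: (List.replicate n1 (c + 1) ++ c ::
      (List.replicate (K + 1) i ++ List.replicate q 1)) := by
    simp only [alpha, hx1, hc1, hc, hn1, hK', hq]
  have eb : beta = (x + 1) :: (List.replicate n1 (c + 1) ++ c ::
      (List.replicate K i ++ (i - 1) :: List.replicate (q + 1) 1)) := by
    simp only [beta, hx1, hc1, hc, hn1, hK, hq']
  have eg : gamma = x :: (List.replicate (n1 + 1) (c + 1) ++
      (List.replicate (K + 1) i ++ List.replicate q 1)) := by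
    simp only [gamma, hx, hc1, hn1', hK', hq]
  have ed : delta = x :: (List.replicate (n1 + 1) (c + 1) ++
      (List.replicate K i ++ (i - 1) :: List.replicate (q + 1) 1)) := by
    simp only [delta, hx, hc1, hn1', hK, hq']
  -- decompositions for pairs 1 and 4
  have ea' : alpha = ((x + 1) :: (List.replicate n1 (c + 1) ++ c :: List.replicate K i))
      ++ (i :: List.replicate q 1) := by
    rw [ea]; simp [List.replicate_succ', List.append_assoc]
  have eb' : beta = ((x + 1) :: (List.replicate n1 (c + 1) ++ c :: List.replicate K i))
      ++ ((i - 1) :: List.replicate (q + 1) 1) := by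
    rw [eb]; simp [List.append_assoc]
  have eg' : gamma = (x :: (List.replicate (n1 + 1) (c + 1) ++ List.replicate K i))
      ++ (i :: List.replicate q 1) := by
    rw [eg]; simp [List.replicate_succ', List.append_assoc]
  have ed' : delta = (x :: (List.replicate (n1 + 1) (c + 1) ++ List.replicate K i))
      ++ ((i - 1) :: List.replicate (q + 1) 1) := by
    rw [ed]; simp [List.append_assoc]
  -- decompositions for pairs 2, 3 using gamma/delta with prefix replicate n1
  have eg2 : gamma = x :: (List.replicate n1 (c + 1) ++ (c + 1) ::
      (List.replicate (K + 1) i ++ List.replicate q 1)) := by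
    rw [eg]; simp [List.replicate_succ', List.append_assoc]
  have ed2 : delta = x :: (List.replicate n1 (c + 1) ++ (c + 1) ::
      (List.replicate K i ++ (i - 1) :: List.replicate (q + 1) 1)) := by
    rw [ed]; simp [List.replicate_succ', List.append_assoc]
  obtain ⟨I, rfl⟩ : ∃ I, i = I + 1 := ⟨i - 1, by omega⟩
  refine ⟨⟨?_, ?_⟩, ⟨?_, ?_⟩, ⟨?_, ?_⟩, ⟨?_, ?_⟩, ?_, ?_⟩
  · rw [ea', eb']; exact (dom_append_iff _ _ _).mpr (lemB _ q hi1)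
  · rw [ea', eb']
    exact fun h => lemB' _ q hi1 ((dom_append_iff _ _ _).mp h)
  · rw [eb, ed2]; exact lemC x c _ _
  · rw [eb, ed2]; exact lemC' x _ _
  · rw [ea, eg2]; exact lemC x c _ _
  · rw [ea, eg2]; exact lemC' x _ _
  · rw [eg', ed']; exact (dom_append_iff _ _ _).mpr (lemB _ q hi1)
  · rw [eg', ed']
    exact fun h => lemB' _ q hi1 ((dom_append_iff _ _ _).mp h)
  · rw [eb, eg]
    have : I + 1 - 1 = I := by omega
    rw [this]
    exact not_dom_beta_gamma x c n1 K q I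
  · rw [eb, eg]; exact lemC' x _ _
end
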